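/- arXiv:2201.03007 — 9 statements merged into one kernel-verified Lean document; each statement's English description precedes it below -/
import Mathlib

section
/- There exists a family of 12 pairwise distinct lines in the real projective plane such that every point lying on at least two of the lines lies on at most three of them, and exactly 19 points lie on exactly three of the lines. (This is the maximum possible number of triple points for 12 lines; the paper constructs such an arrangement as the union of a Pappus configuration P∞ with concurrent collinearity-lines and a completion P'∞ of six further lines.) -/
open Matrix Module Submodule

namespace TwelveAux

def nnZ : Fin 12 → Fin 3 → ℤ
  | 0 => ![0,1,0]
  | 1 => ![0,0,1]
  | 2 => ![10,20,3]
  | 3 => ![6,4,3]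
  | 4 => ![30,100,27]
  | 5 => ![10,-20,1]
  | 6 => ![2,-4,-3]
  | 7 => ![30,100,3]
  | 8 => ![30,20,27]
  | 9 => ![2,4,1]
  | 10 => ![10,0,3]
  | 11 => ![0,10,3]

def VZ : Fin 19 → Fin 3 → ℤ
  | 0 => ![1,0,0]
  | 1 => ![3,0,-10]
  | 2 => ![1,0,-2]
  | 3 => ![9,0,-10]
  | 4 => ![1,0,-10]
  | 5 => ![2,-1,0]
  | 6 => ![2,-3,0]
  | 7 => ![10,-3,0]
  | 8 => ![2,1,0]
  | 9 => ![12,-3,-20]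
  | 10 => ![12,-9,20]
  | 11 => ![8,3,-20]
  | 12 => ![3,3,-10]
  | 13 => ![1,-3,10]
  | 14 => ![7,3,-10]
  | 15 => ![3,1,-10]
  | 16 => ![9,-3,10]
  | 17 => ![3,9,-10]
  | _ => ![11,-3,-10]

def tr : Fin 19 → Finset (Fin 12)
  | 0 => {0,1,11}
  | 1 => {0,2,10}
  | 2 => {0,3,9}
  | 3 => {0,4,8}
  | 4 => {0,5,7}
  | 5 => {1,2,9}
  | 6 => {1,3,8}
  | 7 => {1,4,7}
  | 8 => {1,5,6}
  | 9 => {2,3,7}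
  | 10 => {2,4,6}
  | 11 => {3,4,5}
  | 12 => {3,10,11}
  | 13 => {4,9,11}
  | 14 => {5,8,11}
  | 15 => {5,9,10}
  | 16 => {6,7,11}
  | 17 => {6,8,10}
  | _ => {7,8,9}

def ccZ : Fin 12 → Fin 12 → Fin 3 → ℤ
  | 0, 1 => VZ 0
  | 0, 2 => VZ 1
  | 0, 3 => VZ 2
  | 0, 4 => VZ 3
  | 0, 5 => VZ 4
  | 0, 7 => VZ 4
  | 0, 8 => VZ 3
  | 0, 9 => VZ 2
  | 0, 10 => VZ 1
  | 0, 11 => VZ 0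
  | 1, 2 => VZ 5
  | 1, 3 => VZ 6
  | 1, 4 => VZ 7
  | 1, 5 => VZ 8
  | 1, 6 => VZ 8
  | 1, 7 => VZ 7
  | 1, 8 => VZ 6
  | 1, 9 => VZ 5
  | 1, 11 => VZ 0
  | 2, 3 => VZ 9
  | 2, 4 => VZ 10
  | 2, 6 => VZ 10
  | 2, 7 => VZ 9
  | 2, 9 => VZ 5
  | 2, 10 => VZ 1
  | 3, 4 => VZ 11
  | 3, 5 => VZ 11
  | 3, 7 => VZ 9
  | 3, 8 => VZ 6
  | 3, 9 => VZ 2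
  | 3, 10 => VZ 12
  | 3, 11 => VZ 12
  | 4, 5 => VZ 11
  | 4, 6 => VZ 10
  | 4, 7 => VZ 7
  | 4, 8 => VZ 3
  | 4, 9 => VZ 13
  | 4, 11 => VZ 13
  | 5, 6 => VZ 8
  | 5, 7 => VZ 4
  | 5, 8 => VZ 14
  | 5, 9 => VZ 15
  | 5, 10 => VZ 15
  | 5, 11 => VZ 14
  | 6, 7 => VZ 16
  | 6, 8 => VZ 17
  | 6, 10 => VZ 17
  | 6, 11 => VZ 16
  | 7, 8 => VZ 18
  | 7, 9 => VZ 18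
  | 7, 11 => VZ 16
  | 8, 9 => VZ 18
  | 8, 10 => VZ 17
  | 8, 11 => VZ 14
  | 9, 10 => VZ 15
  | 9, 11 => VZ 13
  | 10, 11 => VZ 12
  | 0, 6 => ![3,0,2]
  | 1, 10 => ![0,1,0]
  | 2, 5 => ![4,1,-20]
  | 2, 8 => ![24,-9,-20]
  | 2, 11 => ![3,-3,10]
  | 3, 6 => ![0,3,-4]
  | 4, 10 => ![15,9,-50]
  | 6, 9 => ![1,-1,2]
  | 7, 10 => ![15,-3,-50]
  | _, _ => 0

def S : Fin 12 → Fin 12 → Finset (Fin 12)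
  | 0, 1 => tr 0
  | 0, 2 => tr 1
  | 0, 3 => tr 2
  | 0, 4 => tr 3
  | 0, 5 => tr 4
  | 0, 7 => tr 4
  | 0, 8 => tr 3
  | 0, 9 => tr 2
  | 0, 10 => tr 1
  | 0, 11 => tr 0
  | 1, 2 => tr 5
  | 1, 3 => tr 6
  | 1, 4 => tr 7
  | 1, 5 => tr 8
  | 1, 6 => tr 8
  | 1, 7 => tr 7
  | 1, 8 => tr 6
  | 1, 9 => tr 5
  | 1, 11 => tr 0
  | 2, 3 => tr 9
  | 2, 4 => tr 10
  | 2, 6 => tr 10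
  | 2, 7 => tr 9
  | 2, 9 => tr 5
  | 2, 10 => tr 1
  | 3, 4 => tr 11
  | 3, 5 => tr 11
  | 3, 7 => tr 9
  | 3, 8 => tr 6
  | 3, 9 => tr 2
  | 3, 10 => tr 12
  | 3, 11 => tr 12
  | 4, 5 => tr 11
  | 4, 6 => tr 10
  | 4, 7 => tr 7
  | 4, 8 => tr 3
  | 4, 9 => tr 13
  | 4, 11 => tr 13
  | 5, 6 => tr 8
  | 5, 7 => tr 4
  | 5, 8 => tr 14
  | 5, 9 => tr 15
  | 5, 10 => tr 15
  | 5, 11 => tr 14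
  | 6, 7 => tr 16
  | 6, 8 => tr 17
  | 6, 10 => tr 17
  | 6, 11 => tr 16
  | 7, 8 => tr 18
  | 7, 9 => tr 18
  | 7, 11 => tr 16
  | 8, 9 => tr 18
  | 8, 10 => tr 17
  | 8, 11 => tr 14
  | 9, 10 => tr 15
  | 9, 11 => tr 13
  | 10, 11 => tr 12
  | 0, 6 => {0,6}
  | 1, 10 => {1,10}
  | 2, 5 => {2,5}
  | 2, 8 => {2,8}
  | 2, 11 => {2,11}
  | 3, 6 => {3,6}
  | 4, 10 => {4,10}
  | 6, 9 => {6,9}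
  | 7, 10 => {7,10}
  | _, _ => ∅

def wtZ : Fin 12 → Fin 12 → Fin 3 → ℤ
  | 0, 1 => ![0,0,1]
  | 0, 2 => ![10,0,3]
  | 0, 3 => ![2,0,1]
  | 0, 4 => ![10,0,9]
  | 0, 5 => ![10,0,1]
  | 0, 6 => ![2,0,-3]
  | 0, 7 => ![10,0,1]
  | 0, 8 => ![10,0,9]
  | 0, 9 => ![2,0,1]
  | 0, 10 => ![10,0,3]
  | 0, 11 => ![0,0,1]
  | 1, 0 => ![0,1,0]
  | 1, 2 => ![1,2,0]
  | 1, 3 => ![3,2,0]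
  | 1, 4 => ![3,10,0]
  | 1, 5 => ![1,-2,0]
  | 1, 6 => ![1,-2,0]
  | 1, 7 => ![3,10,0]
  | 1, 8 => ![3,2,0]
  | 1, 9 => ![1,2,0]
  | 1, 10 => ![1,0,0]
  | 1, 11 => ![0,1,0]
  | 2, 0 => ![200,-109,60]
  | 2, 1 => ![3,6,-50]
  | 2, 3 => ![391,-236,270]
  | 2, 4 => ![427,-164,-330]
  | 2, 5 => ![403,-212,70]
  | 2, 6 => ![427,-164,-330]
  | 2, 7 => ![391,-236,270]
  | 2, 8 => ![373,-272,570]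
  | 2, 9 => ![3,6,-50]
  | 2, 10 => ![200,-109,60]
  | 2, 11 => ![209,-91,-90]
  | 3, 0 => ![8,-15,4]
  | 3, 1 => ![9,6,-26]
  | 3, 2 => ![71,-156,66]
  | 3, 4 => ![89,-144,14]
  | 3, 5 => ![89,-144,14]
  | 3, 6 => ![25,-24,-18]
  | 3, 7 => ![71,-156,66]
  | 3, 8 => ![9,6,-26]
  | 3, 9 => ![8,-15,4]
  | 3, 10 => ![49,-69,-6]
  | 3, 11 => ![49,-69,-6]
  | 4, 0 => ![1000,-543,900]
  | 4, 1 => ![81,270,-1090]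
  | 4, 2 => ![2243,-276,-1470]
  | 4, 3 => ![2081,-816,710]
  | 4, 5 => ![2081,-816,710]
  | 4, 6 => ![2243,-276,-1470]
  | 4, 7 => ![81,270,-1090]
  | 4, 8 => ![1000,-543,900]
  | 4, 9 => ![1081,-273,-190]
  | 4, 10 => ![5243,-1905,1230]
  | 4, 11 => ![1081,-273,-190]
  | 5, 0 => ![200,101,20]
  | 5, 1 => ![1,-2,-50]
  | 5, 2 => ![133,68,30]
  | 5, 3 => ![397,208,190]
  | 5, 4 => ![397,208,190]
  | 5, 6 => ![1,-2,-50]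
  | 5, 7 => ![200,101,20]
  | 5, 8 => ![197,107,170]
  | 5, 9 => ![199,103,70]
  | 5, 10 => ![199,103,70]
  | 5, 11 => ![197,107,170]
  | 6, 0 => ![8,13,-12]
  | 6, 1 => ![3,-6,10]
  | 6, 2 => ![107,76,-30]
  | 6, 3 => ![25,8,6]
  | 6, 4 => ![107,76,-30]
  | 6, 5 => ![3,-6,10]
  | 6, 7 => ![49,47,-30]
  | 6, 8 => ![67,11,30]
  | 6, 9 => ![11,7,-2]
  | 6, 10 => ![67,11,30]
  | 6, 11 => ![49,47,-30]
  | 7, 0 => ![1000,-303,100]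
  | 7, 1 => ![9,30,-1090]
  | 7, 2 => ![1991,-636,1290]
  | 7, 3 => ![1991,-636,1290]
  | 7, 4 => ![9,30,-1090]
  | 7, 5 => ![1000,-303,100]
  | 7, 6 => ![1009,-273,-990]
  | 7, 8 => ![991,-333,1190]
  | 7, 9 => ![991,-333,1190]
  | 7, 10 => ![4991,-1545,1590]
  | 7, 11 => ![1009,-273,-990]
  | 8, 0 => ![200,-543,180]
  | 8, 1 => ![81,54,-130]
  | 8, 2 => ![157,-1248,750]
  | 8, 3 => ![81,54,-130]
  | 8, 4 => ![200,-543,180]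
  | 8, 5 => ![281,-489,50]
  | 8, 6 => ![443,-381,-210]
  | 8, 7 => ![119,-597,310]
  | 8, 9 => ![119,-597,310]
  | 8, 10 => ![443,-381,-210]
  | 8, 11 => ![281,-489,50]
  | 9, 0 => ![8,-5,4]
  | 9, 1 => ![1,2,-10]
  | 9, 2 => ![1,2,-10]
  | 9, 3 => ![8,-5,4]
  | 9, 4 => ![43,-19,-10]
  | 9, 5 => ![41,-23,10]
  | 9, 6 => ![3,-1,-2]
  | 9, 7 => ![37,-31,50]
  | 9, 8 => ![37,-31,50]
  | 9, 10 => ![41,-23,10]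
  | 9, 11 => ![43,-19,-10]
  | 10, 0 => ![0,1,0]
  | 10, 1 => ![3,0,-10]
  | 10, 2 => ![0,1,0]
  | 10, 3 => ![9,-109,-30]
  | 10, 4 => ![27,-545,-90]
  | 10, 5 => ![3,-109,-10]
  | 10, 6 => ![27,-109,-90]
  | 10, 7 => ![9,545,-30]
  | 10, 8 => ![27,-109,-90]
  | 10, 9 => ![3,-109,-10]
  | 10, 11 => ![9,-109,-30]
  | 11, 0 => ![0,3,-10]
  | 11, 1 => ![0,3,-10]
  | 11, 2 => ![109,9,-30]
  | 11, 3 => ![109,-9,30]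
  | 11, 4 => ![109,3,-10]
  | 11, 5 => ![109,-21,70]
  | 11, 6 => ![109,27,-90]
  | 11, 7 => ![109,27,-90]
  | 11, 8 => ![109,-21,70]
  | 11, 9 => ![109,3,-10]
  | 11, 10 => ![109,-9,30]
  | _, _ => 0


def castVec (u : Fin 3 → ℤ) : Fin 3 → ℝ := fun k => ((u k : ℤ) : ℝ)

noncomputable def nn : Fin 12 → Fin 3 → ℝ := fun i => castVec (nnZ i)
noncomputable def V : Fin 19 → Fin 3 → ℝ := fun t => castVec (VZ t)
noncomputable def cc : Fin 12 → Fin 12 → Fin 3 → ℝ := fun i j => castVec (ccZ i j)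
noncomputable def wt : Fin 12 → Fin 12 → Fin 3 → ℝ := fun i j => castVec (wtZ i j)

lemma cast_dot (u v : Fin 3 → ℤ) :
    castVec u ⬝ᵥ castVec v = ((u ⬝ᵥ v : ℤ) : ℝ) := by
  simp only [castVec, dotProduct, Fin.sum_univ_three]
  push_cast
  ring

lemma cast_dot_zero (u v : Fin 3 → ℤ) :
    castVec u ⬝ᵥ castVec v = 0 ↔ u ⬝ᵥ v = 0 := by
  rw [cast_dot]
  exact_mod_cast Int.cast_eq_zero (α := ℝ)

-- decidable numeric tables
lemma witZ : ∀ i j : Fin 12, i ≠ j → nnZ i ⬝ᵥ wtZ i j = 0 ∧ nnZ j ⬝ᵥ wtZ i j ≠ 0 := by decide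

lemma ptabZ : ∀ i j : Fin 12, i < j → ∀ l : Fin 12,
    (nnZ l ⬝ᵥ ccZ i j = 0 ↔ l ∈ S i j) := by decide

lemma ttabZ : ∀ t : Fin 19, ∀ l : Fin 12, (nnZ l ⬝ᵥ VZ t = 0 ↔ l ∈ tr t) := by decide

lemma tr_card : ∀ t : Fin 19, (tr t).card = 3 := by decide

lemma tr_inj : Function.Injective tr := by decide

lemma S_card_le : ∀ i j : Fin 12, (S i j).card ≤ 3 := by decide

lemma exists_notMem_S : ∀ i j : Fin 12, ∃ l : Fin 12, l ∉ S i j := by decide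

lemma exists_notMem_tr : ∀ t : Fin 19, ∃ l : Fin 12, l ∉ tr t := by decide

lemma mem_S_self : ∀ i j : Fin 12, i < j → i ∈ S i j ∧ j ∈ S i j := by decide

lemma tag_lemZ : ∀ i j : Fin 12, (S i j).card = 3 →
    ∃ t : Fin 19, ccZ i j = VZ t ∧ S i j = tr t := by decide

lemma nn_self_ne : ∀ i : Fin 12, nnZ i ⬝ᵥ nnZ i ≠ 0 := by decide

-- lifted tables
lemma wit : ∀ i j : Fin 12, i ≠ j → nn i ⬝ᵥ wt i j = 0 ∧ nn j ⬝ᵥ wt i j ≠ 0 := by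
  intro i j h
  obtain ⟨h1, h2⟩ := witZ i j h
  exact ⟨(cast_dot_zero _ _).mpr h1, fun hc => h2 ((cast_dot_zero _ _).mp hc)⟩

lemma ptab : ∀ i j : Fin 12, i < j → ∀ l : Fin 12,
    (nn l ⬝ᵥ cc i j = 0 ↔ l ∈ S i j) := by
  intro i j h l
  exact (cast_dot_zero _ _).trans (ptabZ i j h l)

lemma ttab : ∀ t : Fin 19, ∀ l : Fin 12, (nn l ⬝ᵥ V t = 0 ↔ l ∈ tr t) := by
  intro t l
  exact (cast_dot_zero _ _).trans (ttabZ t l)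

lemma tag_lem : ∀ i j : Fin 12, (S i j).card = 3 →
    ∃ t : Fin 19, cc i j = V t ∧ S i j = tr t := by
  intro i j h
  obtain ⟨t, h1, h2⟩ := tag_lemZ i j h
  exact ⟨t, by unfold cc V; rw [h1], h2⟩

noncomputable def lf (u : Fin 3 → ℝ) : (Fin 3 → ℝ) →ₗ[ℝ] ℝ where
  toFun v := u ⬝ᵥ v
  map_add' x y := dotProduct_add u x y
  map_smul' c x := by simp [smul_eq_mul]

noncomputable def LL : Fin 12 → Submodule ℝ (Fin 3 → ℝ) := fun i => LinearMap.ker (lf (nn i))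

lemma mem_LL {i : Fin 12} {v : Fin 3 → ℝ} : v ∈ LL i ↔ nn i ⬝ᵥ v = 0 := Iff.rfl

lemma span_le_LL {v : Fin 3 → ℝ} {i : Fin 12} :
    span ℝ {v} ≤ LL i ↔ nn i ⬝ᵥ v = 0 := by
  rw [Submodule.span_singleton_le_iff_mem]; exact Iff.rfl

lemma V_ne : ∀ t : Fin 19, V t ≠ 0 := by
  intro t h
  obtain ⟨l, hl⟩ := exists_notMem_tr t
  exact hl ((ttab t l).mp (by rw [h, dotProduct_zero]))

lemma frL (i : Fin 12) : finrank ℝ (LL i) = 2 := by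
  show finrank ℝ ↥(LinearMap.ker (lf (nn i))) = 2
  have h0 : nn i ⬝ᵥ nn i ≠ 0 := by
    rw [show nn i ⬝ᵥ nn i = ((nnZ i ⬝ᵥ nnZ i : ℤ) : ℝ) from cast_dot _ _]
    exact_mod_cast nn_self_ne i
  have hs : Function.Surjective (lf (nn i)) := by
    intro y
    refine ⟨(y / (nn i ⬝ᵥ nn i)) • nn i, ?_⟩
    show nn i ⬝ᵥ ((y / (nn i ⬝ᵥ nn i)) • nn i) = y
    rw [dotProduct_smul, smul_eq_mul, div_mul_cancel₀ y h0]
  have hrk := LinearMap.finrank_range_add_finrank_ker (lf (nn i))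
  have h2 : LinearMap.range (lf (nn i)) = ⊤ := LinearMap.range_eq_top_of_surjective _ hs
  rw [h2, finrank_top, Module.finrank_self, Module.finrank_fin_fun] at hrk
  omega

lemma key {i j : Fin 12} (hij : i ≠ j) {v : Fin 3 → ℝ} (hv : v ≠ 0)
    (hvi : nn i ⬝ᵥ v = 0) (hvj : nn j ⬝ᵥ v = 0)
    {cv : Fin 3 → ℝ} (hc : cv ≠ 0) (hci : nn i ⬝ᵥ cv = 0) (hcj : nn j ⬝ᵥ cv = 0) :
    span ℝ {v} = span ℝ {cv} := by
  obtain ⟨hw0, hw1⟩ := wit i j hij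
  have hLL : LL i ≠ LL j := by
    intro h
    exact hw1 (mem_LL.mp (h ▸ (mem_LL.mpr hw0)))
  have hWle : finrank ℝ ↥(LL i ⊓ LL j) ≤ 1 := by
    by_contra hgt
    push_neg at hgt
    have h1 : LL i ⊓ LL j = LL i :=
      eq_of_le_of_finrank_le inf_le_left (by rw [frL i]; omega)
    have h2 : LL i ⊓ LL j = LL j :=
      eq_of_le_of_finrank_le inf_le_right (by rw [frL j]; omega)
    exact hLL (h1 ▸ h2)
  have hvW : span ℝ {v} ≤ LL i ⊓ LL j := le_inf (span_le_LL.mpr hvi) (span_le_LL.mpr hvj)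
  have hcW : span ℝ {cv} ≤ LL i ⊓ LL j := le_inf (span_le_LL.mpr hci) (span_le_LL.mpr hcj)
  have e1 : span ℝ {v} = LL i ⊓ LL j :=
    eq_of_le_of_finrank_le hvW (by rw [finrank_span_singleton hv]; exact hWle)
  have e2 : span ℝ {cv} = LL i ⊓ LL j :=
    eq_of_le_of_finrank_le hcW (by rw [finrank_span_singleton hc]; exact hWle)
  rw [e1, e2]

lemma card_eq (p : Submodule ℝ (Fin 3 → ℝ)) {v : Fin 3 → ℝ} (hp : p = span ℝ {v})
    (s : Finset (Fin 12)) (hs : ∀ l, nn l ⬝ᵥ v = 0 ↔ l ∈ s) :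
    Nat.card {i : Fin 12 // p ≤ LL i} = s.card := by
  subst hp
  have hiff : ∀ l : Fin 12, (span ℝ {v} ≤ LL l) ↔ l ∈ s := fun l => span_le_LL.trans (hs l)
  rw [Nat.card_congr (Equiv.subtypeEquivRight hiff), Nat.card_eq_fintype_card,
    Fintype.card_coe]

lemma rank_one_span (p : Submodule ℝ (Fin 3 → ℝ)) (h1 : finrank ℝ p = 1) :
    ∃ v : Fin 3 → ℝ, v ≠ 0 ∧ p = span ℝ {v} := by
  have hbot : p ≠ ⊥ := by
    intro h
    rw [h, finrank_bot] at h1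
    omega
  obtain ⟨v, hvp, hv⟩ := Submodule.exists_mem_ne_zero_of_ne_bot hbot
  refine ⟨v, hv, ?_⟩
  have hle : span ℝ {v} ≤ p := by
    rw [Submodule.span_singleton_le_iff_mem]; exact hvp
  exact (eq_of_le_of_finrank_le hle (by rw [h1, finrank_span_singleton hv])).symm

lemma main_char (p : Submodule ℝ (Fin 3 → ℝ)) (h1 : finrank ℝ p = 1)
    (h2 : 2 ≤ Nat.card {i : Fin 12 // p ≤ LL i}) :
    ∃ i j : Fin 12, i < j ∧
      Nat.card {i : Fin 12 // p ≤ LL i} = (S i j).card ∧ p = span ℝ {cc i j} := by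
  obtain ⟨v, hv, hp⟩ := rank_one_span p h1
  letI := Fintype.ofFinite {i : Fin 12 // p ≤ LL i}
  rw [Nat.card_eq_fintype_card] at h2
  obtain ⟨a, b, hab⟩ := Fintype.exists_pair_of_one_lt_card (α := {i : Fin 12 // p ≤ LL i}) (by omega)
  have hab' : a.1 ≠ b.1 := fun h => hab (Subtype.ext h)
  have hdot : ∀ l : Fin 12, p ≤ LL l → nn l ⬝ᵥ v = 0 := by
    intro l hl
    rw [hp] at hl
    exact span_le_LL.mp hl
  have main : ∀ i j : Fin 12, i < j → p ≤ LL i → p ≤ LL j →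
      ∃ i' j' : Fin 12, i' < j' ∧
        Nat.card {i : Fin 12 // p ≤ LL i} = (S i' j').card ∧ p = span ℝ {cc i' j'} := by
    intro i j hlt hi hj
    have hij : i ≠ j := ne_of_lt hlt
    obtain ⟨hiS, hjS⟩ := mem_S_self i j hlt
    have hci : nn i ⬝ᵥ cc i j = 0 := (ptab i j hlt i).mpr hiS
    have hcj : nn j ⬝ᵥ cc i j = 0 := (ptab i j hlt j).mpr hjS
    have hc0 : cc i j ≠ 0 := by
      obtain ⟨l, hl⟩ := exists_notMem_S i j
      intro h
      exact hl ((ptab i j hlt l).mp (by rw [h, dotProduct_zero]))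
    have hspan : span ℝ {v} = span ℝ {cc i j} :=
      key hij hv (hdot i hi) (hdot j hj) hc0 hci hcj
    have hp' : p = span ℝ {cc i j} := hp.trans hspan
    exact ⟨i, j, hlt, card_eq p hp' (S i j) (ptab i j hlt), hp'⟩
  rcases lt_or_gt_of_ne hab' with h | h
  · exact main a.1 b.1 h a.2 b.2
  · exact main b.1 a.1 h b.2 a.2

end TwelveAux

open TwelveAux Module Submodule Matrix in
/-- There exists a family of 12 pairwise distinct lines (2-dimensional linear subspaces of ℝ³)
in the real projective plane such that every point (1-dimensional subspace) lying on at least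
two of the lines lies on at most three of them, and exactly 19 points lie on exactly three of
the lines. -/
theorem twelve_lines_with_19_triple_points :
    ∃ L : Fin 12 → Submodule ℝ (Fin 3 → ℝ),
      Function.Injective L ∧
      (∀ i, Module.finrank ℝ (L i) = 2) ∧
      (∀ p : Submodule ℝ (Fin 3 → ℝ), Module.finrank ℝ p = 1 →
        2 ≤ Nat.card {i : Fin 12 // p ≤ L i} → Nat.card {i : Fin 12 // p ≤ L i} ≤ 3) ∧
      {p : Submodule ℝ (Fin 3 → ℝ) | Module.finrank ℝ p = 1 ∧
        Nat.card {i : Fin 12 // p ≤ L i} = 3}.ncard = 19 := by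
  refine ⟨LL, ?_, frL, ?_, ?_⟩
  · intro i j h
    by_contra hne
    obtain ⟨hw0, hw1⟩ := wit i j hne
    exact hw1 (mem_LL.mp (h ▸ (mem_LL.mpr hw0)))
  · intro p h1 h2
    obtain ⟨i, j, _, hcard, _⟩ := main_char p h1 h2
    rw [hcard]
    exact S_card_le i j
  · have hE : {p : Submodule ℝ (Fin 3 → ℝ) | Module.finrank ℝ p = 1 ∧
        Nat.card {i : Fin 12 // p ≤ LL i} = 3} =
        (fun t : Fin 19 => span ℝ {V t}) '' Set.univ := by
      ext p
      constructor
      · rintro ⟨h1, h3⟩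
        obtain ⟨i, j, _, hcard, hp⟩ := main_char p h1 (by omega)
        have hS3 : (S i j).card = 3 := by omega
        obtain ⟨t, hcV, _⟩ := tag_lem i j hS3
        exact ⟨t, Set.mem_univ t, by show span ℝ {V t} = p; rw [hp, hcV]⟩
      · rintro ⟨t, -, rfl⟩
        refine ⟨finrank_span_singleton (V_ne t), ?_⟩
        rw [card_eq (span ℝ {V t}) rfl (tr t) (ttab t)]
        exact tr_card t
    rw [hE, Set.ncard_image_of_injective Set.univ ?_, Set.ncard_univ,
      Nat.card_eq_fintype_card, Fintype.card_fin]
    intro s t h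
    have h' : span ℝ {V s} = span ℝ {V t} := h
    have hl : ∀ l : Fin 12, (nn l ⬝ᵥ V s = 0 ↔ nn l ⬝ᵥ V t = 0) := by
      intro l
      rw [← @span_le_LL (V s) l, ← @span_le_LL (V t) l, h']
    exact tr_inj (Finset.ext fun l => by rw [← ttab s l, ← ttab t l, hl l])
end

section
/- There exists a family of 12 pairwise distinct lines in the real projective plane whose multiple points have the following exact profile: exactly one point lies on exactly 6 of the lines, exactly 15 points lie on exactly 3 of the lines, exactly 6 points lie on exactly 2 of the lines, and no point lies on exactly 4, exactly 5, or more than 6 of the lines. (Thus 12 lines can attain the minimum possible number, 6, of ordinary points; the paper constructs this arrangement as P^c∞ ∪ P'∞.) -/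
open Module Submodule

namespace TwelveAux

def WZ : Fin 12 → Fin 3 → ℤ := ![![2, 0, 2], ![1, 3, 2], ![-1, 3, 2], ![-2, 0, 2], ![-1, -3, 2], ![1, -3, 2], ![0, 1, 0], ![1, -3, 0], ![1, -1, 0], ![1, 0, 0], ![1, 1, 0], ![1, 3, 0]]
def TZ : Fin 22 → Fin 3 → ℤ := ![![0, 0, 1], ![0, 1, 0], ![0, 2, -3], ![0, 2, 3], ![1, -1, -1], ![1, -1, 1], ![1, 1, -1], ![1, 1, 1], ![2, 0, -1], ![2, 0, 1], ![3, -1, -3], ![3, -1, 0], ![3, -1, 3], ![3, 1, -3], ![3, 1, 0], ![3, 1, 3], ![1, -1, -2], ![1, -1, 2], ![1, 0, -1], ![1, 0, 1], ![1, 1, -2], ![1, 1, 2]]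
def MZ : Fin 22 → ℕ := ![6, 3, 3, 3, 3, 3, 3, 3, 3, 3, 3, 3, 3, 3, 3, 3, 2, 2, 2, 2, 2, 2]

def dotZ (a b : Fin 3 → ℤ) : ℤ := a 0 * b 0 + a 1 * b 1 + a 2 * b 2
def crZ (a b : Fin 3 → ℤ) : Fin 3 → ℤ :=
  ![a 1 * b 2 - a 2 * b 1, a 2 * b 0 - a 0 * b 2, a 0 * b 1 - a 1 * b 0]

noncomputable def cV (a : Fin 3 → ℤ) : Fin 3 → ℝ := fun k => (a k : ℝ)

noncomputable def dotR (x y : Fin 3 → ℝ) : ℝ := x 0 * y 0 + x 1 * y 1 + x 2 * y 2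
noncomputable def crR (x y : Fin 3 → ℝ) : Fin 3 → ℝ :=
  ![x 1 * y 2 - x 2 * y 1, x 2 * y 0 - x 0 * y 2, x 0 * y 1 - x 1 * y 0]

noncomputable def fdot (v : Fin 3 → ℝ) : (Fin 3 → ℝ) →ₗ[ℝ] ℝ where
  toFun x := dotR x v
  map_add' x y := by simp [dotR]; ring
  map_smul' c x := by simp [dotR]; ring

lemma fdot_apply (v x : Fin 3 → ℝ) : fdot v x = dotR x v := rfl

noncomputable def L (i : Fin 12) : Submodule ℝ (Fin 3 → ℝ) :=
  LinearMap.ker (fdot (cV (WZ i)))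

lemma mem_L {x : Fin 3 → ℝ} {i : Fin 12} : x ∈ L i ↔ dotR x (cV (WZ i)) = 0 := by
  rw [L, LinearMap.mem_ker, fdot_apply]

lemma cV_dot (a b : Fin 3 → ℤ) : dotR (cV a) (cV b) = (dotZ a b : ℝ) := by
  simp only [dotR, dotZ, cV]; push_cast; ring

lemma cV_cr (a b : Fin 3 → ℤ) : crR (cV a) (cV b) = cV (crZ a b) := by
  funext k; fin_cases k <;> simp [crR, crZ, cV]

lemma cV_eq_zero {a : Fin 3 → ℤ} : cV a = 0 ↔ a = 0 := by
  constructor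
  · intro h; funext k
    have := congrFun h k
    simpa [cV] using this
  · rintro rfl; funext k; simp [cV]

lemma vec3_ext {α : Type*} {y z : Fin 3 → α} (h0 : y 0 = z 0) (h1 : y 1 = z 1)
    (h2 : y 2 = z 2) : y = z := by
  funext k
  fin_cases k
  exacts [h0, h1, h2]

lemma mem_span_of_cr_zero {x c : Fin 3 → ℝ} (h : crR x c = 0) (hc : c ≠ 0) :
    x ∈ span ℝ {c} := by
  rw [mem_span_singleton]
  have h0 := congrFun h 0
  have h1 := congrFun h 1
  have h2 := congrFun h 2
  simp only [crR, Matrix.cons_val_zero, Matrix.cons_val_one, Matrix.head_cons,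
    Matrix.cons_val_two, Matrix.tail_cons, Pi.zero_apply, sub_eq_zero] at h0 h1 h2
  have hcc : c 0 ≠ 0 ∨ c 1 ≠ 0 ∨ c 2 ≠ 0 := by
    by_contra hcon
    push_neg at hcon
    apply hc
    exact vec3_ext (z := (0 : Fin 3 → ℝ)) hcon.1 hcon.2.1 hcon.2.2
  rcases hcc with h | h | h
  · refine ⟨x 0 / c 0, vec3_ext ?_ ?_ ?_⟩ <;>
      · simp only [Pi.smul_apply, smul_eq_mul]
        field_simp
        try linarith [h0, h1, h2]
  · refine ⟨x 1 / c 1, vec3_ext ?_ ?_ ?_⟩ <;>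
      · simp only [Pi.smul_apply, smul_eq_mul]
        field_simp
        try linarith [h0, h1, h2]
  · refine ⟨x 2 / c 2, vec3_ext ?_ ?_ ?_⟩ <;>
      · simp only [Pi.smul_apply, smul_eq_mul]
        field_simp
        try linarith [h0, h1, h2]

lemma cr_zero_of_mem_span {x c : Fin 3 → ℝ} (h : x ∈ span ℝ {c}) : crR x c = 0 := by
  rw [mem_span_singleton] at h
  obtain ⟨a, rfl⟩ := h
  refine vec3_ext ?_ ?_ ?_ <;>
    · simp only [crR, Matrix.cons_val_zero, Matrix.cons_val_one, Matrix.head_cons,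
        Matrix.cons_val_two, Matrix.tail_cons, Pi.zero_apply, Pi.smul_apply, smul_eq_mul]
      ring

lemma spans_eq {x c : Fin 3 → ℝ} (hx : x ≠ 0) (hc : c ≠ 0) (h : crR x c = 0) :
    span ℝ {x} = span ℝ {c} := by
  have hle : span ℝ {x} ≤ span ℝ {c} := by
    rw [span_singleton_le_iff_mem]; exact mem_span_of_cr_zero h hc
  exact Submodule.eq_of_le_of_finrank_le hle
    (by rw [finrank_span_singleton hc, finrank_span_singleton hx])

lemma cr_cr {x u v : Fin 3 → ℝ} (hu : dotR x u = 0) (hv : dotR x v = 0) :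
    crR x (crR u v) = 0 := by
  simp only [dotR] at hu hv
  refine vec3_ext ?_ ?_ ?_ <;>
    simp only [crR, Matrix.cons_val_zero, Matrix.cons_val_one, Matrix.head_cons,
      Matrix.cons_val_two, Matrix.tail_cons, Pi.zero_apply]
  · linear_combination u 0 * hv - v 0 * hu
  · linear_combination u 1 * hv - v 1 * hu
  · linear_combination u 2 * hv - v 2 * hu

lemma exists_gen {p : Submodule ℝ (Fin 3 → ℝ)} (hp : finrank ℝ p = 1) :
    ∃ x : Fin 3 → ℝ, x ≠ 0 ∧ p = span ℝ {x} := by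
  obtain ⟨v, hv0, hv⟩ := finrank_eq_one_iff'.mp hp
  refine ⟨(v : Fin 3 → ℝ), ?_, ?_⟩
  · intro h
    exact hv0 (by ext; simp [h])
  · apply le_antisymm
    · intro x hx
      obtain ⟨c, hc⟩ := hv ⟨x, hx⟩
      rw [mem_span_singleton]
      exact ⟨c, congrArg Subtype.val hc⟩
    · rw [span_singleton_le_iff_mem]; exact v.2

lemma multL_span (X : Fin 3 → ℤ) :
    Nat.card {i : Fin 12 // span ℝ {cV X} ≤ L i}
      = (Finset.univ.filter (fun i : Fin 12 => dotZ X (WZ i) = 0)).card := by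
  have he : ∀ i : Fin 12, (span ℝ {cV X} ≤ L i) ↔ dotZ X (WZ i) = 0 := by
    intro i
    rw [span_singleton_le_iff_mem, mem_L, cV_dot]
    exact_mod_cast Int.cast_eq_zero (α := ℝ)
  rw [Nat.card_congr (Equiv.subtypeEquivRight he), Nat.card_eq_fintype_card,
    Fintype.card_subtype]

lemma key_fact : ∀ i j : Fin 12, i ≠ j → crZ (WZ i) (WZ j) ≠ 0 ∧
    ∃ k : Fin 22, crZ (crZ (WZ i) (WZ j)) (TZ k) = 0 := by decide

lemma TZ_ne : ∀ k : Fin 22, TZ k ≠ 0 := by decide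

lemma TZ_pairwise : ∀ k l : Fin 22, k ≠ l → crZ (TZ k) (TZ l) ≠ 0 := by decide

lemma multZ_eq : ∀ k : Fin 22,
    (Finset.univ.filter (fun i : Fin 12 => dotZ (TZ k) (WZ i) = 0)).card = MZ k := by decide

lemma MZ_vals : ∀ k : Fin 22, MZ k = 2 ∨ MZ k = 3 ∨ MZ k = 6 := by decide

lemma cVT_ne (k : Fin 22) : cV (TZ k) ≠ 0 := fun h => TZ_ne k (cV_eq_zero.mp h)

lemma classify {p : Submodule ℝ (Fin 3 → ℝ)} (hp : finrank ℝ p = 1) {i j : Fin 12}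
    (hij : i ≠ j) (hi : p ≤ L i) (hj : p ≤ L j) :
    ∃ k : Fin 22, p = span ℝ {cV (TZ k)} := by
  obtain ⟨x, hx0, rfl⟩ := exists_gen hp
  have hxi : dotR x (cV (WZ i)) = 0 :=
    mem_L.mp ((span_singleton_le_iff_mem x _).mp hi)
  have hxj : dotR x (cV (WZ j)) = 0 :=
    mem_L.mp ((span_singleton_le_iff_mem x _).mp hj)
  obtain ⟨hcr0, k, hk⟩ := key_fact i j hij
  have hcV : cV (crZ (WZ i) (WZ j)) ≠ 0 := fun h => hcr0 (cV_eq_zero.mp h)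
  have hxc : crR x (cV (crZ (WZ i) (WZ j))) = 0 := by
    rw [← cV_cr]; exact cr_cr hxi hxj
  have h1 : span ℝ {x} = span ℝ {cV (crZ (WZ i) (WZ j))} := spans_eq hx0 hcV hxc
  have h2 : span ℝ {cV (crZ (WZ i) (WZ j))} = span ℝ {cV (TZ k)} := by
    refine spans_eq hcV (cVT_ne k) ?_
    rw [cV_cr, hk]
    exact cV_eq_zero.mpr rfl
  exact ⟨k, h1.trans h2⟩

lemma classify' {p : Submodule ℝ (Fin 3 → ℝ)} (hp : finrank ℝ p = 1)
    (h2 : 2 ≤ Nat.card {i : Fin 12 // p ≤ L i}) :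
    ∃ k : Fin 22, p = span ℝ {cV (TZ k)} ∧
      Nat.card {i : Fin 12 // p ≤ L i} = MZ k := by
  haveI : Fintype {i : Fin 12 // p ≤ L i} := Fintype.ofFinite _
  have hlt : 1 < Fintype.card {i : Fin 12 // p ≤ L i} := by
    rw [← Nat.card_eq_fintype_card]; omega
  obtain ⟨a, b, hab⟩ := Fintype.exists_pair_of_one_lt_card hlt
  have hab' : (a : Fin 12) ≠ (b : Fin 12) := fun h => hab (Subtype.ext h)
  obtain ⟨k, hk⟩ := classify hp hab' a.2 b.2
  refine ⟨k, hk, ?_⟩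
  rw [hk, multL_span, multZ_eq]

lemma set_eq (m : ℕ) (hm : 2 ≤ m) :
    {p : Submodule ℝ (Fin 3 → ℝ) | Module.finrank ℝ p = 1 ∧
        Nat.card {i : Fin 12 // p ≤ L i} = m}
      = (fun k : Fin 22 => span ℝ {cV (TZ k)}) '' {k | MZ k = m} := by
  ext p
  simp only [Set.mem_setOf_eq, Set.mem_image]
  constructor
  · rintro ⟨h1, hm'⟩
    obtain ⟨k, hk, hcard⟩ := classify' h1 (by omega)
    exact ⟨k, by omega, hk.symm⟩
  · rintro ⟨k, hMk, rfl⟩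
    refine ⟨finrank_span_singleton (cVT_ne k), ?_⟩
    rw [multL_span, multZ_eq]; exact hMk

lemma span_injOn : ∀ k l : Fin 22,
    span ℝ {cV (TZ k)} = span ℝ {cV (TZ l)} → k = l := by
  intro k l h
  by_contra hne
  have hcr := TZ_pairwise k l hne
  have hmem : cV (TZ k) ∈ span ℝ {cV (TZ l)} := h ▸ mem_span_singleton_self _
  have := cr_zero_of_mem_span hmem
  rw [cV_cr] at this
  exact hcr (cV_eq_zero.mp this)

lemma ncard_eq (m : ℕ) :
    ((fun k : Fin 22 => span ℝ {cV (TZ k)}) '' {k | MZ k = m}).ncard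
      = (Finset.univ.filter (fun k : Fin 22 => MZ k = m)).card := by
  rw [Set.ncard_image_of_injOn (fun k _ l _ h => span_injOn k l h)]
  have : {k : Fin 22 | MZ k = m}
      = ↑(Finset.univ.filter (fun k : Fin 22 => MZ k = m)) := by
    ext k; simp
  rw [this, Set.ncard_coe_finset]

lemma inj_fact : ∀ i j : Fin 12, i ≠ j →
    dotZ (dotZ (WZ i) (WZ j) • WZ i - dotZ (WZ i) (WZ i) • WZ j) (WZ i) = 0 ∧
    dotZ (dotZ (WZ i) (WZ j) • WZ i - dotZ (WZ i) (WZ i) • WZ j) (WZ j) ≠ 0 := by decide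

lemma dotZ_ne : ∀ i : Fin 12, dotZ (WZ i) (WZ i) ≠ 0 := by decide

lemma finrank_L (i : Fin 12) : finrank ℝ (L i) = 2 := by
  have hne : dotR (cV (WZ i)) (cV (WZ i)) ≠ 0 := by
    rw [cV_dot]
    exact_mod_cast dotZ_ne i
  have hr : LinearMap.range (fdot (cV (WZ i))) = ⊤ := by
    rcases Ideal.eq_bot_or_top (LinearMap.range (fdot (cV (WZ i)))) with h | h
    · exfalso
      apply hne
      have : fdot (cV (WZ i)) (cV (WZ i)) ∈ LinearMap.range (fdot (cV (WZ i))) :=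
        LinearMap.mem_range_self _ _
      rw [h] at this
      simpa [fdot_apply] using this
    · exact h
  have := LinearMap.finrank_range_add_finrank_ker (fdot (cV (WZ i)))
  rw [hr, finrank_top, Module.finrank_self, Module.finrank_fin_fun] at this
  rw [L]
  omega

lemma L_inj : Function.Injective L := by
  intro i j h
  by_contra hij
  obtain ⟨h1, h2⟩ := inj_fact i j hij
  set y := dotZ (WZ i) (WZ j) • WZ i - dotZ (WZ i) (WZ i) • WZ j with hy
  have hmi : cV y ∈ L i := by
    rw [mem_L, cV_dot, h1, Int.cast_zero]
  rw [h, mem_L, cV_dot] at hmi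
  exact h2 (by exact_mod_cast hmi)

end TwelveAux

/-- There exists a family of 12 pairwise distinct lines in the real projective plane whose
multiple points have the exact profile: one point on exactly 6 lines, 15 points on exactly 3
lines, 6 points on exactly 2 lines, and no point on exactly 4, exactly 5, or more than 6 lines.
Thus 12 lines attain the minimum possible number, 6, of ordinary points. -/
theorem twelve_lines_with_6_ordinary_points :
    ∃ L : Fin 12 → Submodule ℝ (Fin 3 → ℝ),
      Function.Injective L ∧
      (∀ i, Module.finrank ℝ (L i) = 2) ∧
      {p : Submodule ℝ (Fin 3 → ℝ) | Module.finrank ℝ p = 1 ∧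
        Nat.card {i : Fin 12 // p ≤ L i} = 6}.ncard = 1 ∧
      {p : Submodule ℝ (Fin 3 → ℝ) | Module.finrank ℝ p = 1 ∧
        Nat.card {i : Fin 12 // p ≤ L i} = 3}.ncard = 15 ∧
      {p : Submodule ℝ (Fin 3 → ℝ) | Module.finrank ℝ p = 1 ∧
        Nat.card {i : Fin 12 // p ≤ L i} = 2}.ncard = 6 ∧
      (∀ p : Submodule ℝ (Fin 3 → ℝ), Module.finrank ℝ p = 1 →
        Nat.card {i : Fin 12 // p ≤ L i} ≠ 4 ∧
        Nat.card {i : Fin 12 // p ≤ L i} ≠ 5 ∧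
        Nat.card {i : Fin 12 // p ≤ L i} ≤ 6) := by
  refine ⟨TwelveAux.L, TwelveAux.L_inj, TwelveAux.finrank_L, ?_, ?_, ?_, ?_⟩
  · rw [TwelveAux.set_eq 6 (by norm_num), TwelveAux.ncard_eq]
    decide
  · rw [TwelveAux.set_eq 3 (by norm_num), TwelveAux.ncard_eq]
    decide
  · rw [TwelveAux.set_eq 2 (by norm_num), TwelveAux.ncard_eq]
    decide
  · intro p hp
    by_cases hc : Nat.card {i : Fin 12 // p ≤ TwelveAux.L i} ≤ 1
    · omega
    · obtain ⟨k, _, hcard⟩ := TwelveAux.classify' hp (by omega)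
      have := TwelveAux.MZ_vals k
      omega
end

section
/- Let n ≥ 3, let α : Fin n → ℝ², let L = {i < j < l} be a 3-element subset of Fin n such that α_i, α_j, α_l are pairwise linearly independent, and let b ∈ ℝⁿ. Then α_L · b = 0 if and only if the three lines ℓ_i(b), ℓ_j(b), ℓ_l(b) have a common point, i.e. there exists p ∈ ℝ² with α_i · p = b_i, α_j · p = b_j and α_l · p = b_l. (Thus the translate b lies on the discriminantal hyperplane D_L exactly when the lines indexed by L fail to be in general position.) -/
/-- `det2 u v = u₁v₂ − u₂v₁`. -/
noncomputable def det2 (u v : Fin 2 → ℝ) : ℝ := u 0 * v 1 - u 1 * v 0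

/-- The normal vector `α_L` of the discriminantal hyperplane for the ordered triple
`i < j < l`: `α_L = det(α_j, α_l)·e_i − det(α_i, α_l)·e_j + det(α_i, α_j)·e_l`. -/
noncomputable def alphaT {n : ℕ} (α : Fin n → Fin 2 → ℝ) (i j l : Fin n) : Fin n → ℝ :=
  fun m => (if m = i then det2 (α j) (α l) else 0)
    - (if m = j then det2 (α i) (α l) else 0)
    + (if m = l then det2 (α i) (α j) else 0)

lemma det2_ne_zero {u v : Fin 2 → ℝ} (h : LinearIndependent ℝ ![u, v]) : det2 u v ≠ 0 := by
  intro hd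
  rw [LinearIndependent.pair_iff] at h
  simp only [det2] at hd
  obtain ⟨-, hv0⟩ := h (v 0) (-(u 0)) (by funext t; fin_cases t <;> simp <;> nlinarith)
  obtain ⟨-, hv1⟩ := h (v 1) (-(u 1)) (by funext t; fin_cases t <;> simp <;> nlinarith)
  obtain ⟨h1, -⟩ := h 1 0 (by
    funext t; fin_cases t <;>
      simp [neg_eq_zero.mp hv0, neg_eq_zero.mp hv1])
  exact one_ne_zero h1

/-- For a 3-element subset `L = {i < j < l}` of `Fin n` with `α_i, α_j, α_l` pairwise linearly
independent, a translate `b` satisfies `α_L · b = 0` iff the three lines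
`ℓ_i(b), ℓ_j(b), ℓ_l(b)` have a common point, i.e. `b` lies on the discriminantal hyperplane
`D_L` exactly when the lines indexed by `L` fail to be in general position. -/
theorem mem_DL_iff_concurrent {n : ℕ} (hn : 3 ≤ n) (α : Fin n → Fin 2 → ℝ)
    (i j l : Fin n) (hij : i < j) (hjl : j < l)
    (hij' : LinearIndependent ℝ ![α i, α j])
    (hil' : LinearIndependent ℝ ![α i, α l])
    (hjl' : LinearIndependent ℝ ![α j, α l])
    (b : Fin n → ℝ) :
    (∑ m, alphaT α i j l m * b m = 0) ↔
      ∃ p : Fin 2 → ℝ,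
        (∑ t, α i t * p t = b i) ∧ (∑ t, α j t * p t = b j) ∧ (∑ t, α l t * p t = b l) := by
  have hsum : (∑ m, alphaT α i j l m * b m) =
      det2 (α j) (α l) * b i - det2 (α i) (α l) * b j + det2 (α i) (α j) * b l := by
    simp only [alphaT, sub_mul, add_mul, Finset.sum_add_distrib, Finset.sum_sub_distrib,
      ite_mul, zero_mul, Finset.sum_ite_eq', Finset.mem_univ, if_true]
  have hD : det2 (α i) (α j) ≠ 0 := det2_ne_zero hij'
  rw [hsum]
  simp only [det2] at hD ⊢
  constructor
  · intro h
    refine ⟨![(b i * α j 1 - b j * α i 1) / (α i 0 * α j 1 - α i 1 * α j 0),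
        (α i 0 * b j - α j 0 * b i) / (α i 0 * α j 1 - α i 1 * α j 0)], ?_, ?_, ?_⟩
    · simp only [Fin.sum_univ_two, Matrix.cons_val_zero, Matrix.cons_val_one, Matrix.head_cons]
      field_simp
      ring
    · simp only [Fin.sum_univ_two, Matrix.cons_val_zero, Matrix.cons_val_one, Matrix.head_cons]
      rw [mul_div_assoc', mul_div_assoc', ← add_div, div_eq_iff hD]
      ring
    · simp only [Fin.sum_univ_two, Matrix.cons_val_zero, Matrix.cons_val_one, Matrix.head_cons]
      rw [mul_div_assoc', mul_div_assoc', ← add_div, div_eq_iff hD]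
      linear_combination -h
  · rintro ⟨p, hi, hj, hl⟩
    simp only [Fin.sum_univ_two] at hi hj hl
    rw [← hi, ← hj, ← hl]
    ring
end

section
/- Let n ≥ 3, let α : Fin n → ℝ² have α_i, α_j linearly independent for all i ≠ j, let K ⊆ Fin n with |K| ≥ 3 and let b ∈ ℝⁿ. Then the lines ℓ_i(b), i ∈ K, have a common point if and only if α_L · b = 0 for every 3-element subset L of K; that is, the translate b lies in D_K := ⋂_{L ⊆ K, |L| = 3} D_L exactly when the lines indexed by K are concurrent. -/
/-- `α_L` for a 3-element subset `L = {i < j < l}` of `Fin n`. -/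
noncomputable def alphaL {n : ℕ} (α : Fin n → Fin 2 → ℝ) (L : Finset (Fin n)) : Fin n → ℝ :=
  match Finset.sort L (· ≤ ·) with
  | [i, j, l] => alphaT α i j l
  | _ => 0

/-- The scalar `α_L · b` for the ordered triple `x, y, z`. -/
noncomputable def Rexp {n : ℕ} (α : Fin n → Fin 2 → ℝ) (b : Fin n → ℝ) (x y z : Fin n) : ℝ :=
  det2 (α y) (α z) * b x - det2 (α x) (α z) * b y + det2 (α x) (α y) * b z

lemma sumT {n : ℕ} (α : Fin n → Fin 2 → ℝ) (b : Fin n → ℝ) (x y z : Fin n) :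
    ∑ m, alphaT α x y z m * b m = Rexp α b x y z := by
  simp [alphaT, Rexp, sub_mul, add_mul, ite_mul, zero_mul,
    Finset.sum_sub_distrib, Finset.sum_add_distrib, Finset.sum_ite_eq']

lemma R213 {n : ℕ} (α : Fin n → Fin 2 → ℝ) (b : Fin n → ℝ) (x y z : Fin n) :
    Rexp α b y x z = -Rexp α b x y z := by simp only [Rexp, det2]; ring

lemma R132 {n : ℕ} (α : Fin n → Fin 2 → ℝ) (b : Fin n → ℝ) (x y z : Fin n) :
    Rexp α b x z y = -Rexp α b x y z := by simp only [Rexp, det2]; ring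

lemma R231 {n : ℕ} (α : Fin n → Fin 2 → ℝ) (b : Fin n → ℝ) (x y z : Fin n) :
    Rexp α b y z x = Rexp α b x y z := by simp only [Rexp, det2]; ring

lemma R312 {n : ℕ} (α : Fin n → Fin 2 → ℝ) (b : Fin n → ℝ) (x y z : Fin n) :
    Rexp α b z x y = Rexp α b x y z := by simp only [Rexp, det2]; ring

lemma R321 {n : ℕ} (α : Fin n → Fin 2 → ℝ) (b : Fin n → ℝ) (x y z : Fin n) :
    Rexp α b z y x = -Rexp α b x y z := by simp only [Rexp, det2]; ring

lemma card3 {n : ℕ} {x y z : Fin n} (hxy : x ≠ y) (hxz : x ≠ z) (hyz : y ≠ z) :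
    ({x, y, z} : Finset (Fin n)).card = 3 := by
  rw [Finset.card_insert_of_notMem (by simp [hxy, hxz]),
    Finset.card_insert_of_notMem (by simp [hyz]), Finset.card_singleton]

lemma triple {n : ℕ} (α : Fin n → Fin 2 → ℝ) (b : Fin n → ℝ) {x y z : Fin n}
    (hxy : x ≠ y) (hxz : x ≠ z) (hyz : y ≠ z)
    (h : ∑ m, alphaL α {x, y, z} m * b m = 0) : Rexp α b x y z = 0 := by
  have hlen : (Finset.sort ({x, y, z} : Finset (Fin n)) (· ≤ ·)).length = 3 := by
    rw [Finset.length_sort, card3 hxy hxz hyz]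
  obtain ⟨a1, a2, a3, hsort⟩ := List.length_eq_three.mp hlen
  have hL : alphaL α {x, y, z} = alphaT α a1 a2 a3 := by unfold alphaL; rw [hsort]
  rw [hL, sumT] at h
  have hnd := Finset.sort_nodup ({x, y, z} : Finset (Fin n)) (· ≤ ·)
  rw [hsort] at hnd
  simp [List.nodup_cons] at hnd
  have hm1 : a1 ∈ ({x, y, z} : Finset (Fin n)) := by
    rw [← Finset.mem_sort (α := Fin n) (· ≤ ·), hsort]; simp
  have hm2 : a2 ∈ ({x, y, z} : Finset (Fin n)) := by
    rw [← Finset.mem_sort (α := Fin n) (· ≤ ·), hsort]; simp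
  have hm3 : a3 ∈ ({x, y, z} : Finset (Fin n)) := by
    rw [← Finset.mem_sort (α := Fin n) (· ≤ ·), hsort]; simp
  simp only [Finset.mem_insert, Finset.mem_singleton] at hm1 hm2 hm3
  rcases hm1 with rfl | rfl | rfl <;> rcases hm2 with rfl | rfl | rfl <;>
    rcases hm3 with rfl | rfl | rfl <;>
    first
      | (exfalso; tauto)
      | exact h
      | (rw [R132] at h; linarith)
      | (rw [R213] at h; linarith)
      | (rw [R321] at h; linarith)
      | (rw [R231] at h; exact h)
      | (rw [R312] at h; exact h)

/-- For a generic arrangement of `n` lines in `ℝ²` and a subset `K` of at least three indices,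
the lines `ℓ_i(b)`, `i ∈ K`, are concurrent iff `α_L · b = 0` for every 3-element subset `L`
of `K`, i.e. exactly when the translate `b` lies in `D_K = ⋂_{L ⊆ K, |L|=3} D_L`. -/
theorem concurrent_iff_mem_DK {n : ℕ} (hn : 3 ≤ n) (α : Fin n → Fin 2 → ℝ)
    (hα : ∀ i j : Fin n, i ≠ j → LinearIndependent ℝ ![α i, α j])
    (K : Finset (Fin n)) (hK : 3 ≤ K.card) (b : Fin n → ℝ) :
    (∃ p : Fin 2 → ℝ, ∀ i ∈ K, ∑ t, α i t * p t = b i) ↔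
      ∀ L : Finset (Fin n), L ⊆ K → L.card = 3 → ∑ m, alphaL α L m * b m = 0 := by
  constructor
  · rintro ⟨p, hp⟩ L hLK hL3
    have hlen : (Finset.sort L (· ≤ ·)).length = 3 := by rw [Finset.length_sort, hL3]
    obtain ⟨a1, a2, a3, hsort⟩ := List.length_eq_three.mp hlen
    have hL : alphaL α L = alphaT α a1 a2 a3 := by unfold alphaL; rw [hsort]
    rw [hL, sumT]
    have hm1 : a1 ∈ L := by rw [← Finset.mem_sort (α := Fin n) (· ≤ ·), hsort]; simp
    have hm2 : a2 ∈ L := by rw [← Finset.mem_sort (α := Fin n) (· ≤ ·), hsort]; simp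
    have hm3 : a3 ∈ L := by rw [← Finset.mem_sort (α := Fin n) (· ≤ ·), hsort]; simp
    have h1 := hp a1 (hLK hm1)
    have h2 := hp a2 (hLK hm2)
    have h3 := hp a3 (hLK hm3)
    rw [Rexp, ← h1, ← h2, ← h3]
    simp [det2, Fin.sum_univ_two]
    ring
  · intro H
    obtain ⟨i, hi, j, hj, hij⟩ := Finset.one_lt_card.mp (by omega : 1 < K.card)
    have hd : det2 (α i) (α j) ≠ 0 := det2_ne_zero (hα i j hij)
    refine ⟨![(b i * α j 1 - b j * α i 1) / det2 (α i) (α j),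
      (α i 0 * b j - α j 0 * b i) / det2 (α i) (α j)], ?_⟩
    intro m hm
    rw [Fin.sum_univ_two]
    simp only [Matrix.cons_val_zero, Matrix.cons_val_one, Matrix.head_cons]
    by_cases hmi : m = i
    · subst hmi
      field_simp
      simp only [det2]
      ring
    · by_cases hmj : m = j
      · subst hmj
        field_simp
        simp only [det2]
        ring
      · have hsub : ({i, j, m} : Finset (Fin n)) ⊆ K := by
          intro t ht; simp only [Finset.mem_insert, Finset.mem_singleton] at ht
          rcases ht with rfl | rfl | rfl <;> assumption
        have key := triple α b hij (Ne.symm hmi) (Ne.symm hmj)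
          (H {i, j, m} hsub (card3 hij (Ne.symm hmi) (Ne.symm hmj)))
        simp only [Rexp, det2] at key
        field_simp
        simp only [det2]
        linear_combination -key
end

section
/- Let α : Fin 6 → ℝ² be given by α₁ = (−2,2), α₂ = (−3,4), α₃ = (0,6), α₄ = (2,4), α₅ = (3,2), α₆ = (−1,2). Then there exists b ∈ ℝ⁶ whose exact concurrency pattern is the quadrilateral set I = {{1,2,3}, {1,4,6}, {2,5,6}, {3,4,5}}; moreover the linear span of the four vectors α_L ∈ ℝ⁶, L ∈ I, has dimension 3 (so ⋂_{L ∈ I} D_L is a multiplicity-4 intersection of rank 3 of the discriminantal arrangement B(6,2,α), and α is non very generic). -/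
/-- `I` is the exact concurrency pattern of the translate `b`: a triple of the lines
`ℓ_i(b) = {x : α i · x = b i}` is concurrent exactly when its index set belongs to `I`. -/
def ConcPattern {n : ℕ} (α : Fin n → Fin 2 → ℝ) (b : Fin n → ℝ)
    (I : Finset (Finset (Fin n))) : Prop :=
  ∀ L : Finset (Fin n), L.card = 3 →
    ((∃ p : Fin 2 → ℝ, ∀ i ∈ L, ∑ t, α i t * p t = b i) ↔ L ∈ I)

private lemma cons_val_five' {α : Type*} {m : ℕ} (x : α) (u : Fin (m+5) → α) :
    Matrix.vecCons x u 5 = Matrix.vecHead (Matrix.vecTail (Matrix.vecTail (Matrix.vecTail (Matrix.vecTail u)))) :=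
  rfl

private lemma fmk0 (h : 0 < 6) : (⟨0, h⟩ : Fin 6) = 0 := rfl
private lemma fmk1 (h : 1 < 6) : (⟨1, h⟩ : Fin 6) = 1 := rfl
private lemma fmk2 (h : 2 < 6) : (⟨2, h⟩ : Fin 6) = 2 := rfl
private lemma fmk3 (h : 3 < 6) : (⟨3, h⟩ : Fin 6) = 3 := rfl
private lemma fmk4 (h : 4 < 6) : (⟨4, h⟩ : Fin 6) = 4 := rfl
private lemma fmk5 (h : 5 < 6) : (⟨5, h⟩ : Fin 6) = 5 := rfl

private lemma sort3 {n : ℕ} {a b c : Fin n} (hab : a < b) (hbc : b < c) :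
    Finset.sort ({a,b,c} : Finset (Fin n)) (· ≤ ·) = [a,b,c] := by
  rw [Finset.sort_insert, Finset.sort_insert, Finset.sort_singleton]
  · intro x hx; simp only [Finset.mem_singleton] at hx; subst hx; exact hbc.le
  · simp only [Finset.mem_singleton]; exact hbc.ne
  · intro x hx
    simp only [Finset.mem_insert, Finset.mem_singleton] at hx
    rcases hx with h|h <;> subst h
    · exact hab.le
    · exact (hab.trans hbc).le
  · simp only [Finset.mem_insert, Finset.mem_singleton]
    push_neg
    exact ⟨hab.ne, (hab.trans hbc).ne⟩

private lemma alphaL3 {n : ℕ} (α : Fin n → Fin 2 → ℝ) {a b c : Fin n} (hab : a < b) (hbc : b < c) :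
    alphaL α {a,b,c} = alphaT α a b c := by
  rw [alphaL, sort3 hab hbc]

set_option maxHeartbeats 2000000 in
private lemma crapo_part1 :
    ConcPattern ![![(-2:ℝ), 2], ![-3, 4], ![0, 6], ![2, 4], ![3, 2], ![-1, 2]]
    ![0, 0, 0, 12, 18, 2] {{0, 1, 2}, {0, 3, 5}, {1, 4, 5}, {2, 3, 4}} := by
  intro L hL
  fin_cases L <;> first
    | exact absurd hL (by decide)
    | (constructor
       · rintro ⟨p, hp⟩
         simp only [Finset.mem_mk, Multiset.mem_coe, List.mem_cons, List.not_mem_nil, or_false,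
           forall_eq_or_imp, forall_eq, Fin.sum_univ_two, fmk0, fmk1, fmk2, fmk3, fmk4, fmk5,
           Matrix.cons_val_zero, Matrix.cons_val_one, Matrix.head_cons, Matrix.cons_val_two,
           Matrix.cons_val_three, Matrix.cons_val_four, cons_val_five', Matrix.cons_val_succ,
           Matrix.vecHead, Matrix.vecTail, Function.comp] at hp
         first
           | decide
           | (exfalso; obtain ⟨e1, e2, e3⟩ := hp; linarith)
       · intro hmem
         first
           | exact absurd hmem (by decide)
           | (refine ⟨![0, 0], ?_⟩; intro i hi
              simp only [Finset.mem_mk, Multiset.mem_coe, List.mem_cons, List.not_mem_nil,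
                or_false, fmk0, fmk1, fmk2, fmk3, fmk4, fmk5] at hi
              rcases hi with rfl|rfl|rfl <;>
                norm_num [Fin.sum_univ_two, cons_val_five', fmk0, fmk1, fmk2, fmk3, fmk4, fmk5,
                  Matrix.vecHead, Matrix.vecTail, Matrix.cons_val_two, Matrix.cons_val_three,
                  Matrix.cons_val_four, Matrix.cons_val_succ] <;> done)
           | (refine ⟨![2, 2], ?_⟩; intro i hi
              simp only [Finset.mem_mk, Multiset.mem_coe, List.mem_cons, List.not_mem_nil,
                or_false, fmk0, fmk1, fmk2, fmk3, fmk4, fmk5] at hi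
              rcases hi with rfl|rfl|rfl <;>
                norm_num [Fin.sum_univ_two, cons_val_five', fmk0, fmk1, fmk2, fmk3, fmk4, fmk5,
                  Matrix.vecHead, Matrix.vecTail, Matrix.cons_val_two, Matrix.cons_val_three,
                  Matrix.cons_val_four, Matrix.cons_val_succ] <;> done)
           | (refine ⟨![4, 3], ?_⟩; intro i hi
              simp only [Finset.mem_mk, Multiset.mem_coe, List.mem_cons, List.not_mem_nil,
                or_false, fmk0, fmk1, fmk2, fmk3, fmk4, fmk5] at hi
              rcases hi with rfl|rfl|rfl <;>
                norm_num [Fin.sum_univ_two, cons_val_five', fmk0, fmk1, fmk2, fmk3, fmk4, fmk5,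
                  Matrix.vecHead, Matrix.vecTail, Matrix.cons_val_two, Matrix.cons_val_three,
                  Matrix.cons_val_four, Matrix.cons_val_succ] <;> done)
           | (refine ⟨![6, 0], ?_⟩; intro i hi
              simp only [Finset.mem_mk, Multiset.mem_coe, List.mem_cons, List.not_mem_nil,
                or_false, fmk0, fmk1, fmk2, fmk3, fmk4, fmk5] at hi
              rcases hi with rfl|rfl|rfl <;>
                norm_num [Fin.sum_univ_two, cons_val_five', fmk0, fmk1, fmk2, fmk3, fmk4, fmk5,
                  Matrix.vecHead, Matrix.vecTail, Matrix.cons_val_two, Matrix.cons_val_three,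
                  Matrix.cons_val_four, Matrix.cons_val_succ] <;> done))

private lemma crapo_part2 :
    Module.finrank ℝ ↥(Submodule.span ℝ
      (alphaL ![![(-2:ℝ), 2], ![-3, 4], ![0, 6], ![2, 4], ![3, 2], ![-1, 2]] ''
        ↑({{0, 1, 2}, {0, 3, 5}, {1, 4, 5}, {2, 3, 4}} : Finset (Finset (Fin 6))))) = 3 := by
  set α : Fin 6 → Fin 2 → ℝ := ![![-2, 2], ![-3, 4], ![0, 6], ![2, 4], ![3, 2], ![-1, 2]] with hα
  have e1 : alphaL α {0,1,2} = ![(-18:ℝ),12,-2,0,0,0] := by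
    rw [alphaL3 _ (by decide) (by decide)]
    funext m
    fin_cases m <;>
      simp (config := { decide := true }) [alphaT, det2, hα, cons_val_five',
        Matrix.vecHead, Matrix.vecTail] <;> norm_num
  have e2 : alphaL α {0,3,5} = ![(8:ℝ),0,0,2,0,-12] := by
    rw [alphaL3 _ (by decide) (by decide)]
    funext m
    fin_cases m <;>
      simp (config := { decide := true }) [alphaT, det2, hα, cons_val_five',
        Matrix.vecHead, Matrix.vecTail] <;> norm_num
  have e3 : alphaL α {1,4,5} = ![(0:ℝ),8,0,0,2,-18] := by
    rw [alphaL3 _ (by decide) (by decide)]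
    funext m
    fin_cases m <;>
      simp (config := { decide := true }) [alphaT, det2, hα, cons_val_five',
        Matrix.vecHead, Matrix.vecTail] <;> norm_num
  have e4 : alphaL α {2,3,4} = ![(0:ℝ),0,-8,18,-12,0] := by
    rw [alphaL3 _ (by decide) (by decide)]
    funext m
    fin_cases m <;>
      simp (config := { decide := true }) [alphaT, det2, hα, cons_val_five',
        Matrix.vecHead, Matrix.vecTail] <;> norm_num
  have himg : alphaL α '' ↑({{0, 1, 2}, {0, 3, 5}, {1, 4, 5}, {2, 3, 4}} : Finset (Finset (Fin 6)))
      = {![(-18:ℝ),12,-2,0,0,0], ![8,0,0,2,0,-12], ![0,8,0,0,2,-18], ![0,0,-8,18,-12,0]} := by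
    rw [show (↑({{0, 1, 2}, {0, 3, 5}, {1, 4, 5}, {2, 3, 4}} : Finset (Finset (Fin 6))) : Set (Finset (Fin 6)))
        = {{0, 1, 2}, {0, 3, 5}, {1, 4, 5}, {2, 3, 4}} by simp]
    simp only [Set.image_insert_eq, Set.image_singleton, e1, e2, e3, e4]
  rw [himg]
  have hdep : (![(0:ℝ),0,-8,18,-12,0] : Fin 6 → ℝ)
      = (4:ℝ) • ![(-18:ℝ),12,-2,0,0,0] + (9:ℝ) • ![(8:ℝ),0,0,2,0,-12] + (-6:ℝ) • ![(0:ℝ),8,0,0,2,-18] := by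
    funext m
    fin_cases m <;> norm_num
  have hspan : Submodule.span ℝ ({![(-18:ℝ),12,-2,0,0,0], ![8,0,0,2,0,-12], ![0,8,0,0,2,-18], ![0,0,-8,18,-12,0]} : Set (Fin 6 → ℝ))
      = Submodule.span ℝ {![(-18:ℝ),12,-2,0,0,0], ![8,0,0,2,0,-12], ![0,8,0,0,2,-18]} := by
    apply le_antisymm
    · rw [Submodule.span_le]
      intro x hx
      rcases hx with rfl|rfl|rfl|rfl
      · exact Submodule.subset_span (by simp)
      · exact Submodule.subset_span (by simp)
      · exact Submodule.subset_span (by simp)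
      · rw [hdep]
        refine Submodule.add_mem _ (Submodule.add_mem _ ?_ ?_) ?_ <;>
          exact Submodule.smul_mem _ _ (Submodule.subset_span (by simp))
    · refine Submodule.span_mono ?_
      intro x hx
      simp only [Set.mem_insert_iff, Set.mem_singleton_iff] at hx ⊢
      tauto
  rw [hspan]
  have hrange : ({![(-18:ℝ),12,-2,0,0,0], ![8,0,0,2,0,-12], ![0,8,0,0,2,-18]} : Set (Fin 6 → ℝ))
      = Set.range ![![(-18:ℝ),12,-2,0,0,0], ![8,0,0,2,0,-12], ![0,8,0,0,2,-18]] := by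
    ext x
    simp only [Matrix.range_cons, Matrix.range_empty, Set.union_empty, Set.mem_insert_iff,
      Set.mem_singleton_iff, Set.insert_union, Set.mem_union, Set.mem_empty_iff_false, or_false]
  rw [hrange]
  have hli : LinearIndependent ℝ ![![(-18:ℝ),12,-2,0,0,0], ![8,0,0,2,0,-12], ![0,8,0,0,2,-18]] := by
    rw [Fintype.linearIndependent_iff]
    intro g hg
    have h2 := congrFun hg 2
    have h3 := congrFun hg 3
    have h4 := congrFun hg 4
    simp [Fin.sum_univ_three, Matrix.vecHead, Matrix.vecTail, Function.comp] at h2 h3 h4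
    intro i
    fin_cases i <;> simp <;> linarith
  rw [finrank_span_eq_card hli]
  simp

/-- The arrangement with normals `α₁ = (−2,2), α₂ = (−3,4), α₃ = (0,6), α₄ = (2,4),
α₅ = (3,2), α₆ = (−1,2)` admits a translate whose exact concurrency pattern is the
quadrilateral set `I = {{1,2,3},{1,4,6},{2,5,6},{3,4,5}}` (0-indexed below), and the span of
the four normal vectors `α_L`, `L ∈ I`, has dimension 3: a multiplicity-4 rank-3 intersection
of `B(6,2,α)`, so `α` is non very generic. -/
theorem crapo_quadrilateral_set :
    let α : Fin 6 → Fin 2 → ℝ :=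
      ![![-2, 2], ![-3, 4], ![0, 6], ![2, 4], ![3, 2], ![-1, 2]]
    let I : Finset (Finset (Fin 6)) := {{0, 1, 2}, {0, 3, 5}, {1, 4, 5}, {2, 3, 4}}
    (∃ b : Fin 6 → ℝ, ConcPattern α b I) ∧
      Module.finrank ℝ ↥(Submodule.span ℝ (alphaL α '' ↑I)) = 3 := by
  intro α I
  exact ⟨⟨![0, 0, 0, 12, 18, 2], crapo_part1⟩, crapo_part2⟩
end

section
/- Let α : Fin 6 → ℝ² be given by α₁ = (−2,2), α₂ = (−3,4), α₃ = (0,6), α₄ = (2,4), α₅ = (3,2), α₆ = (−1,2). Then there exists b' ∈ ℝ⁶ whose exact concurrency pattern is the quadrilateral set I' = {{1,2,6}, {1,3,4}, {2,3,5}, {4,5,6}} (the companion of the quadrilateral set I = {{1,2,3}, {1,4,6}, {2,5,6}, {3,4,5}}, whose members are the complements of the members of I in {1,…,6}). -/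
section Wedge

variable {R S : Type*} [CommRing R] [CommRing S] {n : ℕ}

def wedge (u v : Fin 2 → R) : R := u 0 * v 1 - u 1 * v 0

/-- The determinant of the `3 × 3` matrix with rows `(α i, b i)`, `(α j, b j)`, `(α k, b k)`. -/
def concurrencyDet (α : Fin n → Fin 2 → R) (b : Fin n → R) (i j k : Fin n) : R :=
  wedge (α j) (α k) * b i + wedge (α k) (α i) * b j + wedge (α i) (α j) * b k

theorem RingHom.map_wedge (f : R →+* S) (u v : Fin 2 → R) :
    wedge (fun t => f (u t)) (fun t => f (v t)) = f (wedge u v) := by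
  simp [wedge]

theorem RingHom.map_concurrencyDet (f : R →+* S) (α : Fin n → Fin 2 → R) (b : Fin n → R)
    (i j k : Fin n) :
    concurrencyDet (fun i t => f (α i t)) (fun i => f (b i)) i j k =
      f (concurrencyDet α b i j k) := by
  simp [concurrencyDet, f.map_wedge]

end Wedge

theorem exists_common_point_iff {K : Type*} [Field K] {u v w : Fin 2 → K} {a b c : K}
    (hvw : wedge v w ≠ 0) :
    (∃ p, u ⬝ᵥ p = a ∧ v ⬝ᵥ p = b ∧ w ⬝ᵥ p = c) ↔
      wedge v w * a + wedge w u * b + wedge u v * c = 0 := by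
  constructor
  · rintro ⟨p, rfl, rfl, rfl⟩
    simp only [wedge, dotProduct, Fin.sum_univ_two]
    ring
  · intro h
    -- Cramer's rule: the intersection point of the lines with normals `v` and `w`
    refine ⟨![(b * w 1 - c * v 1) / wedge v w, (c * v 0 - b * w 0) / wedge v w],
      ?_, ?_, ?_⟩ <;>
      simp only [dotProduct, Fin.sum_univ_two, Matrix.cons_val_zero, Matrix.cons_val_one] <;>
      field_simp <;> simp only [wedge] at h hvw ⊢
    · linear_combination -h
    · ring
    · ring

theorem concPattern_iff {n : ℕ} {α : Fin n → Fin 2 → ℝ} {b : Fin n → ℝ}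
    {I : Finset (Finset (Fin n))} (hα : Pairwise fun i j => wedge (α i) (α j) ≠ 0) :
    ConcPattern α b I ↔ ∀ i j k, i ≠ j → i ≠ k → j ≠ k →
      (concurrencyDet α b i j k = 0 ↔ {i, j, k} ∈ I) := by
  have concurrent_iff : ∀ i j k, j ≠ k →
      ((∃ p : Fin 2 → ℝ, ∀ l ∈ ({i, j, k} : Finset (Fin n)), ∑ t, α l t * p t = b l) ↔
        concurrencyDet α b i j k = 0) := by
    intro i j k hjk
    simp only [Finset.mem_insert, Finset.mem_singleton, forall_eq_or_imp, forall_eq]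
    exact exists_common_point_iff (hα hjk)
  constructor
  · intro h i j k hij hik hjk
    rw [← concurrent_iff i j k hjk]
    exact h _ (Finset.card_eq_three.mpr ⟨i, j, k, hij, hik, hjk, rfl⟩)
  · intro h L hL
    obtain ⟨i, j, k, hij, hik, hjk, rfl⟩ := Finset.card_eq_three.mp hL
    rw [concurrent_iff i j k hjk]
    exact h i j k hij hik hjk

theorem concPattern_intCast_iff {n : ℕ} {A : Fin n → Fin 2 → ℤ} {B : Fin n → ℤ}
    {I : Finset (Finset (Fin n))} (hA : Pairwise fun i j => wedge (A i) (A j) ≠ 0) :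
    ConcPattern (fun i t => (A i t : ℝ)) (fun i => (B i : ℝ)) I ↔ ∀ i j k, i ≠ j → i ≠ k →
      j ≠ k → (concurrencyDet A B i j k = 0 ↔ {i, j, k} ∈ I) := by
  have hcast := (Int.castRingHom ℝ).map_concurrencyDet A B
  simp only [eq_intCast] at hcast
  rw [concPattern_iff]
  · simp only [hcast, Int.cast_eq_zero]
  · intro i j hij
    simpa using
      ((Int.castRingHom ℝ).map_wedge (A i) (A j)).trans_ne (by simpa using hA hij)

/-- The arrangement with normals `α₁ = (−2,2), α₂ = (−3,4), α₃ = (0,6), α₄ = (2,4),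
α₅ = (3,2), α₆ = (−1,2)` admits a translate whose exact concurrency pattern is the companion
quadrilateral set `I' = {{1,2,6},{1,3,4},{2,3,5},{4,5,6}}` (0-indexed below), the set of
complements of the members of `I = {{1,2,3},{1,4,6},{2,5,6},{3,4,5}}`. -/
theorem crapo_companion_quadrilateral_set :
    let α : Fin 6 → Fin 2 → ℝ :=
      ![![-2, 2], ![-3, 4], ![0, 6], ![2, 4], ![3, 2], ![-1, 2]]
    let I' : Finset (Finset (Fin 6)) := {{0, 1, 5}, {0, 2, 3}, {1, 2, 4}, {3, 4, 5}}
    ∃ b' : Fin 6 → ℝ, ConcPattern α b' I' := by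
  intro α I'
  -- the four triples of `I'` meet at `(0, 0)`, `(12, 12)`, `(16, 12)` and `(18, 9)`
  refine ⟨fun i => ((![0, 0, 72, 72, 72, 0] : Fin 6 → ℤ) i : ℝ), ?_⟩
  let A : Fin 6 → Fin 2 → ℤ := ![![-2, 2], ![-3, 4], ![0, 6], ![2, 4], ![3, 2], ![-1, 2]]
  have hα : α = fun i t => (A i t : ℝ) := by
    ext i t
    fin_cases i <;> fin_cases t <;> simp [α, A]
  rw [hα, concPattern_intCast_iff (by unfold Pairwise; decide)]
  decide
end

section
/- Let α : Fin 6 → ℝ² be given by α₁ = (−2,2), α₂ = (−2,4), α₃ = (0,6), α₄ = (2,4), α₅ = (2,2), α₆ = (1,0). Then for each of the four sets I₁ = {{1,2,3},{1,5,6},{2,4,6},{3,4,5}}, I₂ = {{1,2,6},{1,3,5},{2,3,4},{4,5,6}}, I₃ = {{1,3,4},{1,5,6},{2,3,5},{2,4,6}}, I₄ = {{1,3,5},{1,4,6},{2,3,4},{2,5,6}}, there exists b ∈ ℝ⁶ whose exact concurrency pattern is that set; i.e. this arrangement admits four distinct quadrilateral-set translates. -/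
noncomputable def Amat : Fin 6 → Fin 2 → ℝ :=
  ![![-2, 2], ![-2, 4], ![0, 6], ![2, 4], ![2, 2], ![1, 0]]

/-- Reduce `ConcPattern` to a statement about ordered triples. -/
theorem concPattern_of_ordered {A : Fin 6 → Fin 2 → ℝ} {b : Fin 6 → ℝ}
    {I : Finset (Finset (Fin 6))}
    (H : ∀ i j k : Fin 6, i < j → j < k →
      ((∃ p : Fin 2 → ℝ, (∑ t, A i t * p t = b i) ∧ (∑ t, A j t * p t = b j) ∧
        (∑ t, A k t * p t = b k)) ↔ ({i, j, k} : Finset (Fin 6)) ∈ I)) :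
    ConcPattern A b I := by
  set D : Fin 6 → Fin 6 → Fin 6 → Prop := fun i j k =>
    ((∃ p : Fin 2 → ℝ, (∑ t, A i t * p t = b i) ∧ (∑ t, A j t * p t = b j) ∧
        (∑ t, A k t * p t = b k)) ↔ ({i, j, k} : Finset (Fin 6)) ∈ I) with hD
  have s12 : ∀ i j k : Fin 6, D i j k → D j i k := by
    intro i j k h
    constructor
    · rintro ⟨p, h1, h2, h3⟩
      have := h.mp ⟨p, h2, h1, h3⟩
      rwa [Finset.insert_comm] at this
    · intro hm
      obtain ⟨p, h1, h2, h3⟩ := h.mpr (by rwa [Finset.insert_comm] at hm)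
      exact ⟨p, h2, h1, h3⟩
  have s23 : ∀ i j k : Fin 6, D i j k → D i k j := by
    intro i j k h
    have e : ({i, k, j} : Finset (Fin 6)) = {i, j, k} := by rw [Finset.pair_comm k j]
    constructor
    · rintro ⟨p, h1, h2, h3⟩
      have := h.mp ⟨p, h1, h3, h2⟩
      rwa [← e] at this
    · intro hm
      obtain ⟨p, h1, h2, h3⟩ := h.mpr (by rwa [e] at hm)
      exact ⟨p, h1, h3, h2⟩
  have H2 : ∀ i j k : Fin 6, i ≠ j → i ≠ k → j ≠ k → D i j k := by
    intro i j k hij hik hjk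
    rcases lt_trichotomy i j with h1 | h1 | h1
    · rcases lt_trichotomy j k with h2 | h2 | h2
      · exact H i j k h1 h2
      · exact absurd h2 hjk
      · rcases lt_trichotomy i k with h3 | h3 | h3
        · exact s23 _ _ _ (H i k j h3 h2)
        · exact absurd h3 hik
        · exact s23 _ _ _ (s12 _ _ _ (H k i j h3 h1))
    · exact absurd h1 hij
    · rcases lt_trichotomy i k with h2 | h2 | h2
      · exact s12 _ _ _ (H j i k h1 h2)
      · exact absurd h2 hik
      · rcases lt_trichotomy j k with h3 | h3 | h3
        · exact s12 _ _ _ (s23 _ _ _ (H j k i h3 h2))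
        · exact absurd h3 hjk
        · exact s12 _ _ _ (s23 _ _ _ (s12 _ _ _ (H k j i h3 h1)))
  intro L hL
  obtain ⟨x, y, z, hxy, hxz, hyz, rfl⟩ := Finset.card_eq_three.mp hL
  have h := H2 x y z hxy hxz hyz
  constructor
  · rintro ⟨p, hp⟩
    exact h.mp ⟨p, hp x (by simp), hp y (by simp), hp z (by simp)⟩
  · intro hm
    obtain ⟨p, h1, h2, h3⟩ := h.mpr hm
    refine ⟨p, ?_⟩
    intro i hi
    simp only [Finset.mem_insert, Finset.mem_singleton] at hi
    rcases hi with rfl | rfl | rfl <;> assumption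

noncomputable def b1v : Fin 6 → ℝ := ![0, 0, 0, 8, 8, 2]

set_option maxHeartbeats 1000000 in
theorem H1 : ∀ i j k : Fin 6, i < j → j < k →
    ((∃ p : Fin 2 → ℝ, (∑ t, Amat i t * p t = b1v i) ∧ (∑ t, Amat j t * p t = b1v j) ∧
      (∑ t, Amat k t * p t = b1v k)) ↔ ({i, j, k} : Finset (Fin 6)) ∈
      ({{0, 1, 2}, {0, 4, 5}, {1, 3, 5}, {2, 3, 4}} : Finset (Finset (Fin 6)))) := by
  intro i j k hij hjk
  fin_cases i <;> fin_cases j <;> fin_cases k <;>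
  first
    | (refine absurd hij ?_; decide)
    | (refine absurd hjk ?_; decide)
    | (refine iff_of_true ⟨![0, 0], ?_, ?_, ?_⟩ ?_ <;>
        first
          | decide
          | (norm_num [Fin.sum_univ_two, Amat, b1v]; done))
    | (refine iff_of_true ⟨![2, 2], ?_, ?_, ?_⟩ ?_ <;>
        first
          | decide
          | (norm_num [Fin.sum_univ_two, Amat, b1v]; done))
    | (refine iff_of_true ⟨![2, 1], ?_, ?_, ?_⟩ ?_ <;>
        first
          | decide
          | (norm_num [Fin.sum_univ_two, Amat, b1v]; done))
    | (refine iff_of_true ⟨![4, 0], ?_, ?_, ?_⟩ ?_ <;>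
        first
          | decide
          | (norm_num [Fin.sum_univ_two, Amat, b1v]; done))
    | (refine iff_of_false ?_ ?_
       · rintro ⟨p, e1, e2, e3⟩
         norm_num [Fin.sum_univ_two, Amat, b1v] at e1 e2 e3
         all_goals linarith
       · decide)

noncomputable def b2v : Fin 6 → ℝ := ![0, 0, 12, 16, 8, 0]

set_option maxHeartbeats 1000000 in
theorem H2 : ∀ i j k : Fin 6, i < j → j < k →
    ((∃ p : Fin 2 → ℝ, (∑ t, Amat i t * p t = b2v i) ∧ (∑ t, Amat j t * p t = b2v j) ∧
      (∑ t, Amat k t * p t = b2v k)) ↔ ({i, j, k} : Finset (Fin 6)) ∈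
      ({{0, 1, 5}, {0, 2, 4}, {1, 2, 3}, {3, 4, 5}} : Finset (Finset (Fin 6)))) := by
  intro i j k hij hjk
  fin_cases i <;> fin_cases j <;> fin_cases k <;>
  first
    | (refine absurd hij ?_; decide)
    | (refine absurd hjk ?_; decide)
    | (refine iff_of_true ⟨![0, 0], ?_, ?_, ?_⟩ ?_ <;>
        first
          | decide
          | (norm_num [Fin.sum_univ_two, Amat, b2v]; done))
    | (refine iff_of_true ⟨![2, 2], ?_, ?_, ?_⟩ ?_ <;>
        first
          | decide
          | (norm_num [Fin.sum_univ_two, Amat, b2v]; done))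
    | (refine iff_of_true ⟨![4, 2], ?_, ?_, ?_⟩ ?_ <;>
        first
          | decide
          | (norm_num [Fin.sum_univ_two, Amat, b2v]; done))
    | (refine iff_of_true ⟨![0, 4], ?_, ?_, ?_⟩ ?_ <;>
        first
          | decide
          | (norm_num [Fin.sum_univ_two, Amat, b2v]; done))
    | (refine iff_of_false ?_ ?_
       · rintro ⟨p, e1, e2, e3⟩
         norm_num [Fin.sum_univ_two, Amat, b2v] at e1 e2 e3
         all_goals linarith
       · decide)

noncomputable def b3v : Fin 6 → ℝ := ![0, -8, 0, 0, 8, 2]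

set_option maxHeartbeats 1000000 in
theorem H3 : ∀ i j k : Fin 6, i < j → j < k →
    ((∃ p : Fin 2 → ℝ, (∑ t, Amat i t * p t = b3v i) ∧ (∑ t, Amat j t * p t = b3v j) ∧
      (∑ t, Amat k t * p t = b3v k)) ↔ ({i, j, k} : Finset (Fin 6)) ∈
      ({{0, 2, 3}, {0, 4, 5}, {1, 2, 4}, {1, 3, 5}} : Finset (Finset (Fin 6)))) := by
  intro i j k hij hjk
  fin_cases i <;> fin_cases j <;> fin_cases k <;>
  first
    | (refine absurd hij ?_; decide)
    | (refine absurd hjk ?_; decide)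
    | (refine iff_of_true ⟨![0, 0], ?_, ?_, ?_⟩ ?_ <;>
        first
          | decide
          | (norm_num [Fin.sum_univ_two, Amat, b3v]; done))
    | (refine iff_of_true ⟨![2, 2], ?_, ?_, ?_⟩ ?_ <;>
        first
          | decide
          | (norm_num [Fin.sum_univ_two, Amat, b3v]; done))
    | (refine iff_of_true ⟨![4, 0], ?_, ?_, ?_⟩ ?_ <;>
        first
          | decide
          | (norm_num [Fin.sum_univ_two, Amat, b3v]; done))
    | (refine iff_of_true ⟨![2, -1], ?_, ?_, ?_⟩ ?_ <;>
        first
          | decide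
          | (norm_num [Fin.sum_univ_two, Amat, b3v]; done))
    | (refine iff_of_false ?_ ?_
       · rintro ⟨p, e1, e2, e3⟩
         norm_num [Fin.sum_univ_two, Amat, b3v] at e1 e2 e3
         all_goals linarith
       · decide)

noncomputable def b4v : Fin 6 → ℝ := ![0, -12, 0, 12, 0, 2]

set_option maxHeartbeats 1000000 in
theorem H4 : ∀ i j k : Fin 6, i < j → j < k →
    ((∃ p : Fin 2 → ℝ, (∑ t, Amat i t * p t = b4v i) ∧ (∑ t, Amat j t * p t = b4v j) ∧
      (∑ t, Amat k t * p t = b4v k)) ↔ ({i, j, k} : Finset (Fin 6)) ∈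
      ({{0, 2, 4}, {0, 3, 5}, {1, 2, 3}, {1, 4, 5}} : Finset (Finset (Fin 6)))) := by
  intro i j k hij hjk
  fin_cases i <;> fin_cases j <;> fin_cases k <;>
  first
    | (refine absurd hij ?_; decide)
    | (refine absurd hjk ?_; decide)
    | (refine iff_of_true ⟨![0, 0], ?_, ?_, ?_⟩ ?_ <;>
        first
          | decide
          | (norm_num [Fin.sum_univ_two, Amat, b4v]; done))
    | (refine iff_of_true ⟨![2, 2], ?_, ?_, ?_⟩ ?_ <;>
        first
          | decide
          | (norm_num [Fin.sum_univ_two, Amat, b4v]; done))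
    | (refine iff_of_true ⟨![6, 0], ?_, ?_, ?_⟩ ?_ <;>
        first
          | decide
          | (norm_num [Fin.sum_univ_two, Amat, b4v]; done))
    | (refine iff_of_true ⟨![2, -2], ?_, ?_, ?_⟩ ?_ <;>
        first
          | decide
          | (norm_num [Fin.sum_univ_two, Amat, b4v]; done))
    | (refine iff_of_false ?_ ?_
       · rintro ⟨p, e1, e2, e3⟩
         norm_num [Fin.sum_univ_two, Amat, b4v] at e1 e2 e3
         all_goals linarith
       · decide)

/-- The arrangement with normals `α₁ = (−2,2), α₂ = (−2,4), α₃ = (0,6), α₄ = (2,4),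
α₅ = (2,2), α₆ = (1,0)` admits four distinct quadrilateral-set translates, with patterns
`I₁ = {{1,2,3},{1,5,6},{2,4,6},{3,4,5}}`, `I₂ = {{1,2,6},{1,3,5},{2,3,4},{4,5,6}}`,
`I₃ = {{1,3,4},{1,5,6},{2,3,5},{2,4,6}}`, `I₄ = {{1,3,5},{1,4,6},{2,3,4},{2,5,6}}`
(0-indexed below). -/
theorem isosceles_four_quadrilateral_sets :
    let α : Fin 6 → Fin 2 → ℝ :=
      ![![-2, 2], ![-2, 4], ![0, 6], ![2, 4], ![2, 2], ![1, 0]]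
    (∃ b : Fin 6 → ℝ, ConcPattern α b
      ({{0, 1, 2}, {0, 4, 5}, {1, 3, 5}, {2, 3, 4}} : Finset (Finset (Fin 6)))) ∧
    (∃ b : Fin 6 → ℝ, ConcPattern α b
      ({{0, 1, 5}, {0, 2, 4}, {1, 2, 3}, {3, 4, 5}} : Finset (Finset (Fin 6)))) ∧
    (∃ b : Fin 6 → ℝ, ConcPattern α b
      ({{0, 2, 3}, {0, 4, 5}, {1, 2, 4}, {1, 3, 5}} : Finset (Finset (Fin 6)))) ∧
    (∃ b : Fin 6 → ℝ, ConcPattern α b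
      ({{0, 2, 4}, {0, 3, 5}, {1, 2, 3}, {1, 4, 5}} : Finset (Finset (Fin 6)))) := by
  intro α
  exact ⟨⟨b1v, concPattern_of_ordered H1⟩, ⟨b2v, concPattern_of_ordered H2⟩,
    ⟨b3v, concPattern_of_ordered H3⟩, ⟨b4v, concPattern_of_ordered H4⟩⟩
end

section
/- Any family of 7 pairwise distinct lines in the real projective plane in which no point lies on more than three of the lines has at most 6 triple points, i.e. at most 6 points lying on exactly three of the lines. (Thus 6 is the maximum multiplicity attainable by a rank-4 simple intersection of B(7,2,A).) -/
def det3 (a b c : Fin 3 → ℝ) : ℝ :=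
  a 0 * b 1 * c 2 - a 0 * b 2 * c 1 - a 1 * b 0 * c 2 + a 1 * b 2 * c 0
    + a 2 * b 0 * c 1 - a 2 * b 1 * c 0

lemma det3_eq_det (a b c : Fin 3 → ℝ) :
    det3 a b c = Matrix.det (Matrix.of ![a, b, c]) := by
  rw [Matrix.det_fin_three]
  simp [det3, Matrix.of_apply]
  try ring

lemma cramer3 (a b c x : Fin 3 → ℝ) :
    det3 a b c • x = det3 x b c • a + det3 a x c • b + det3 a b x • c := by
  funext i
  fin_cases i <;> simp [det3, Pi.smul_apply, smul_eq_mul] <;> try ring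

lemma smul_eq_smul_imp {Δ : ℝ} (hΔ : Δ ≠ 0) {x y : Fin 3 → ℝ} {r : ℝ}
    (h : Δ • x = r • y) : x = (Δ⁻¹ * r) • y := by
  rw [mul_smul, ← h, ← mul_smul, inv_mul_cancel₀ hΔ, one_smul]

lemma fano_vectors (A B C D E F G : Fin 3 → ℝ)
    (hΔ : det3 A B D ≠ 0)
    (hCA : ∀ r : ℝ, C ≠ r • A) (hCB : ∀ r : ℝ, C ≠ r • B)
    (hEA : ∀ r : ℝ, E ≠ r • A) (hED : ∀ r : ℝ, E ≠ r • D)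
    (hFB : ∀ r : ℝ, F ≠ r • B) (hFD : ∀ r : ℝ, F ≠ r • D)
    (hGA : ∀ r : ℝ, G ≠ r • A)
    (h1 : det3 A B C = 0) (h2 : det3 A D E = 0) (h3 : det3 B D F = 0)
    (h4 : det3 A F G = 0) (h5 : det3 B E G = 0) (h6 : det3 C D G = 0)
    (h7 : det3 C E F = 0) : False := by
  set Δ := det3 A B D with hΔdef
  set c₁ := det3 C B D with hc₁
  set c₂ := det3 A C D with hc₂
  set e₁ := det3 E B D with he₁
  set e₃ := det3 A B E with he₃
  set f₂ := det3 A F D with hf₂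
  set f₃ := det3 A B F with hf₃
  set g₁ := det3 G B D with hg₁
  set g₂ := det3 A G D with hg₂
  set g₃ := det3 A B G with hg₃
  have hC : Δ • C = c₁ • A + c₂ • B := by
    have := cramer3 A B D C
    rw [show det3 A B C = 0 from h1, zero_smul, add_zero] at this
    exact this
  have hE : Δ • E = e₁ • A + e₃ • D := by
    have := cramer3 A B D E
    rw [show det3 A E D = 0 by rw [show det3 A E D = -det3 A D E by unfold det3; ring, h2]; ring,
      zero_smul, add_zero] at this
    exact this
  have hF : Δ • F = f₂ • B + f₃ • D := by
    have := cramer3 A B D F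
    rw [show det3 F B D = 0 by rw [show det3 F B D = det3 B D F by unfold det3; ring, h3],
      zero_smul, zero_add] at this
    exact this
  have hG : Δ • G = g₁ • A + g₂ • B + g₃ • D := cramer3 A B D G
  -- nonvanishing of coefficients
  have hc₁0 : c₁ ≠ 0 := by
    intro h0
    rw [h0, zero_smul, zero_add] at hC
    exact hCB _ (smul_eq_smul_imp hΔ hC)
  have hc₂0 : c₂ ≠ 0 := by
    intro h0
    rw [h0, zero_smul, add_zero] at hC
    exact hCA _ (smul_eq_smul_imp hΔ hC)
  have he₁0 : e₁ ≠ 0 := by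
    intro h0
    rw [h0, zero_smul, zero_add] at hE
    exact hED _ (smul_eq_smul_imp hΔ hE)
  have he₃0 : e₃ ≠ 0 := by
    intro h0
    rw [h0, zero_smul, add_zero] at hE
    exact hEA _ (smul_eq_smul_imp hΔ hE)
  have hf₂0 : f₂ ≠ 0 := by
    intro h0
    rw [h0, zero_smul, zero_add] at hF
    exact hFD _ (smul_eq_smul_imp hΔ hF)
  have hf₃0 : f₃ ≠ 0 := by
    intro h0
    rw [h0, zero_smul, add_zero] at hF
    exact hFB _ (smul_eq_smul_imp hΔ hF)
  -- key scalar identities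
  have key4 : (f₂ * g₃ - f₃ * g₂) * Δ = 0 := by
    calc (f₂ * g₃ - f₃ * g₂) * Δ
        = det3 A (f₂ • B + f₃ • D) (g₁ • A + g₂ • B + g₃ • D) := by
          simp only [det3, Pi.add_apply, Pi.smul_apply, smul_eq_mul, hΔdef]; ring
      _ = det3 A (Δ • F) (Δ • G) := by rw [hF, hG]
      _ = Δ * Δ * det3 A F G := by
          simp only [det3, Pi.smul_apply, smul_eq_mul]; ring
      _ = 0 := by rw [h4]; ring
  have key5 : (e₃ * g₁ - e₁ * g₃) * Δ = 0 := by
    calc (e₃ * g₁ - e₁ * g₃) * Δ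
        = det3 B (e₁ • A + e₃ • D) (g₁ • A + g₂ • B + g₃ • D) := by
          simp only [det3, Pi.add_apply, Pi.smul_apply, smul_eq_mul, hΔdef]; ring
      _ = det3 B (Δ • E) (Δ • G) := by rw [hE, hG]
      _ = Δ * Δ * det3 B E G := by
          simp only [det3, Pi.smul_apply, smul_eq_mul]; ring
      _ = 0 := by rw [h5]; ring
  have key6 : (c₂ * g₁ - c₁ * g₂) * Δ = 0 := by
    calc (c₂ * g₁ - c₁ * g₂) * Δ
        = det3 (c₁ • A + c₂ • B) D (g₁ • A + g₂ • B + g₃ • D) := by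
          simp only [det3, Pi.add_apply, Pi.smul_apply, smul_eq_mul, hΔdef]; ring
      _ = det3 (Δ • C) D (Δ • G) := by rw [hC, hG]
      _ = Δ * Δ * det3 C D G := by
          simp only [det3, Pi.smul_apply, smul_eq_mul]; ring
      _ = 0 := by rw [h6]; ring
  have key7 : (c₁ * e₃ * f₂ + c₂ * e₁ * f₃) * Δ = 0 := by
    calc (c₁ * e₃ * f₂ + c₂ * e₁ * f₃) * Δ
        = -det3 (c₁ • A + c₂ • B) (e₁ • A + e₃ • D) (f₂ • B + f₃ • D) := by
          simp only [det3, Pi.add_apply, Pi.smul_apply, smul_eq_mul, hΔdef]; ring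
      _ = -det3 (Δ • C) (Δ • E) (Δ • F) := by rw [hC, hE, hF]
      _ = -(Δ * Δ * Δ * det3 C E F) := by
          simp only [det3, Pi.smul_apply, smul_eq_mul]; ring
      _ = 0 := by rw [h7]; ring
  have k4 : f₂ * g₃ = f₃ * g₂ := by
    have := mul_eq_zero.mp key4
    rcases this with h | h
    · linarith [h]
    · exact absurd h hΔ
  have k5 : e₃ * g₁ = e₁ * g₃ := by
    rcases mul_eq_zero.mp key5 with h | h
    · linarith [h]
    · exact absurd h hΔ
  have k6 : c₂ * g₁ = c₁ * g₂ := by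
    rcases mul_eq_zero.mp key6 with h | h
    · linarith [h]
    · exact absurd h hΔ
  have k7 : c₁ * e₃ * f₂ + c₂ * e₁ * f₃ = 0 := by
    rcases mul_eq_zero.mp key7 with h | h
    · exact h
    · exact absurd h hΔ
  -- G is not a multiple of A
  have hg₃0 : g₃ ≠ 0 := by
    intro h0
    have hg₂0 : g₂ = 0 := by
      have := k4
      rw [h0, mul_zero] at this
      exact (mul_eq_zero.mp this.symm).resolve_left hf₃0
    rw [h0, hg₂0, zero_smul, zero_smul, add_zero, add_zero] at hG
    exact hGA _ (smul_eq_smul_imp hΔ hG)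
  have main : c₂ * e₁ * f₃ * g₃ = c₁ * e₃ * f₂ * g₃ := by
    linear_combination (-(c₂ * f₃)) * k5 + e₃ * f₃ * k6 - c₁ * e₃ * k4
  have main2 : c₂ * e₁ * f₃ = c₁ * e₃ * f₂ := mul_right_cancel₀ hg₃0 main
  have : (2 : ℝ) * (c₂ * e₁ * f₃) = 0 := by linarith [k7, main2]
  have : c₂ * e₁ * f₃ = 0 := by linarith
  exact (mul_ne_zero (mul_ne_zero hc₂0 he₁0) hf₃0) this

open Module Submodule

lemma exists_normal (W : Submodule ℝ (Fin 3 → ℝ)) (h : finrank ℝ W = 2) :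
    ∃ w : Fin 3 → ℝ, w ≠ 0 ∧ ∀ v, v ∈ W ↔ dotProduct w v = 0 := by
  have h3 : finrank ℝ (Fin 3 → ℝ) = 3 := Module.finrank_fin_fun ℝ
  have hann : finrank ℝ W.dualAnnihilator = 1 := by
    have e : finrank ℝ ((Fin 3 → ℝ) ⧸ W) = finrank ℝ W.dualAnnihilator :=
      (Subspace.quotEquivAnnihilator W).finrank_eq
    have hq := Submodule.finrank_quotient_add_finrank W
    omega
  have hne : W.dualAnnihilator ≠ ⊥ := by
    intro hb
    rw [hb, finrank_bot] at hann
    omega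
  obtain ⟨f, hfmem, hfne⟩ := Submodule.exists_mem_ne_zero_of_ne_bot hne
  have hfv : ∀ v, f v = dotProduct (fun j => f (Pi.single j 1)) v := by
    intro v
    have hv : v = ∑ j, v j • (Pi.single j 1 : Fin 3 → ℝ) := by
      funext k
      simp [Pi.single_apply, Finset.sum_apply, mul_ite]
    conv_lhs => rw [hv]
    rw [map_sum]
    simp only [map_smul, smul_eq_mul, dotProduct]
    exact Finset.sum_congr rfl fun x _ => mul_comm _ _
  have hker : W = LinearMap.ker f := by
    have hle : W ≤ LinearMap.ker f := fun x hx => by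
      rw [LinearMap.mem_ker]
      exact (Submodule.mem_dualAnnihilator f).mp hfmem x hx
    have hrange : finrank ℝ (LinearMap.range f) = 1 := by
      have : LinearMap.range f = ⊤ :=
        LinearMap.range_eq_top.mpr (LinearMap.surjective_of_ne_zero hfne)
      rw [this, finrank_top]
      exact Module.finrank_self ℝ
    have hkrank := LinearMap.finrank_range_add_finrank_ker f
    exact Submodule.eq_of_le_of_finrank_eq hle (by omega)
  refine ⟨fun j => f (Pi.single j 1), ?_, ?_⟩
  · intro hw
    apply hfne
    apply LinearMap.ext
    intro v
    rw [LinearMap.zero_apply, hfv, hw]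
    simp [dotProduct]
  · intro v
    rw [hker, LinearMap.mem_ker, hfv]

lemma fano_structure (D : Fin 7 → Fin 7 → Fin 7 → Prop)
    (hs1 : ∀ i j k, D i j k → D j i k)
    (hs2 : ∀ i j k, D i j k → D i k j)
    (hex : ∀ i j, i ≠ j → ∃ k, k ≠ i ∧ k ≠ j ∧ D i j k)
    (hun : ∀ i j k k', i ≠ j → k ≠ i → k ≠ j → k' ≠ i → k' ≠ j →
      D i j k → D i j k' → k = k') :
    ∃ a b c d e f g : Fin 7,
      c ≠ a ∧ c ≠ b ∧ e ≠ a ∧ e ≠ d ∧ f ≠ b ∧ f ≠ d ∧ g ≠ a ∧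
      ¬ D a b d ∧ D a b c ∧ D a d e ∧ D b d f ∧
      D a f g ∧ D b e g ∧ D c d g ∧ D c e f := by
  classical
  -- total choice function
  have hex' : ∀ i j, ∃ k, i ≠ j → (k ≠ i ∧ k ≠ j ∧ D i j k) := by
    intro i j
    by_cases h : i ≠ j
    · obtain ⟨k, hk⟩ := hex i j h
      exact ⟨k, fun _ => hk⟩
    · exact ⟨i, fun h' => absurd h' h⟩
  choose t ht using hex'
  have ht1 : ∀ {i j}, i ≠ j → t i j ≠ i := fun h => ((ht _ _ h).1)
  have ht2 : ∀ {i j}, i ≠ j → t i j ≠ j := fun h => ((ht _ _ h).2.1)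
  have htD : ∀ {i j}, i ≠ j → D i j (t i j) := fun h => ((ht _ _ h).2.2)
  have huq : ∀ {i j k}, i ≠ j → k ≠ i → k ≠ j → D i j k → k = t i j :=
    fun {i j k} hij hki hkj hD => hun i j k (t i j) hij hki hkj (ht1 hij) (ht2 hij) hD (htD hij)
  have hinv : ∀ {i j}, i ≠ j → t i (t i j) = j := by
    intro i j hij
    have hk1 := ht1 hij
    have hk2 := ht2 hij
    exact (huq (Ne.symm hk1) (Ne.symm hij) (Ne.symm hk2) (hs2 _ _ _ (htD hij))).symm
  -- the seven points
  set a : Fin 7 := 0 with ha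
  set b : Fin 7 := 1 with hb
  have hab : a ≠ b := by simp [ha, hb]
  set c : Fin 7 := t a b with hc
  have hca : c ≠ a := ht1 hab
  have hcb : c ≠ b := ht2 hab
  -- choose d outside {a,b,c}
  have hdex : ∃ d : Fin 7, d ≠ a ∧ d ≠ b ∧ d ≠ c := by
    have h1 : ({a, b, c} : Finset (Fin 7)).card ≤ 3 := by
      exact Finset.card_le_three
    have h2 : (({a, b, c} : Finset (Fin 7))ᶜ).Nonempty := by
      rw [← Finset.card_pos, Finset.card_compl]
      simp only [Fintype.card_fin]
      omega
    obtain ⟨d, hd⟩ := h2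
    simp only [Finset.mem_compl, Finset.mem_insert, Finset.mem_singleton, not_or] at hd
    exact ⟨d, hd.1, hd.2.1, hd.2.2⟩
  obtain ⟨d, hda, hdb, hdc⟩ := hdex
  have hnabd : ¬ D a b d := fun h => hdc (huq hab hda hdb h)
  set e : Fin 7 := t a d with he
  set f : Fin 7 := t b d with hf
  set g : Fin 7 := t c d with hg
  have had : a ≠ d := Ne.symm hda
  have hbd : b ≠ d := Ne.symm hdb
  have hcd : c ≠ d := Ne.symm hdc
  have hea : e ≠ a := ht1 had
  have hed : e ≠ d := ht2 had
  have hfb : f ≠ b := ht1 hbd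
  have hfd : f ≠ d := ht2 hbd
  have hgc : g ≠ c := ht1 hcd
  have hgd : g ≠ d := ht2 hcd
  -- basic t computations
  have htac : t a c = b := by rw [hc, hinv hab]
  have htbc : t b c = a :=
    (huq (Ne.symm hcb) hab (Ne.symm hca) (hs2 _ _ _ (hs1 _ _ _ (htD hab)))).symm
  have hrot : ∀ i j k, D i j k → D k i j := fun i j k h => hs1 _ _ _ (hs2 _ _ _ h)
  -- remaining distinctness facts
  have heb : e ≠ b := by
    intro hEq
    exact hnabd (hs2 _ _ _ (hEq ▸ htD had))
  have hec : e ≠ c := by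
    intro hEq
    have hd' : d = t a c := huq (Ne.symm hca) hda hdc (hs2 _ _ _ (hEq ▸ htD had))
    rw [htac] at hd'
    exact hdb hd'
  have hfa : f ≠ a := by
    intro hEq
    exact hnabd (hrot _ _ _ (hEq ▸ htD hbd))
  have hfc : f ≠ c := by
    intro hEq
    have hd' : d = t b c := huq (Ne.symm hcb) hdb hdc (hs2 _ _ _ (hEq ▸ htD hbd))
    rw [htbc] at hd'
    exact hda hd'
  have htde : t d e = a := by
    have : D d e a := hrot _ _ _ (hrot _ _ _ (htD had))
    exact (huq (Ne.symm hed) had (Ne.symm hea) this).symm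
  have htdf : t d f = b := by
    have : D d f b := hrot _ _ _ (hrot _ _ _ (htD hbd))
    exact (huq (Ne.symm hfd) hbd (Ne.symm hfb) this).symm
  have htdg : t d g = c := by
    have : D d g c := hrot _ _ _ (hrot _ _ _ (htD hcd))
    exact (huq (Ne.symm hgd) hcd (Ne.symm hgc) this).symm
  have hfe : f ≠ e := by
    intro hEq
    have hk0 : D b d f := htD hbd
    rw [hEq] at hk0
    have hb' : b = t d e := huq (Ne.symm hed) hbd (Ne.symm heb)
      (hrot _ _ _ (hrot _ _ _ hk0))
    rw [htde] at hb'
    exact hab hb'.symm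
  have hga : g ≠ a := by
    intro hEq
    have hk0 : D c d g := htD hcd
    rw [hEq] at hk0
    have hd' : d = t a c := huq (Ne.symm hca) hda hdc (hrot _ _ _ hk0)
    rw [htac] at hd'
    exact hdb hd'
  have hgb : g ≠ b := by
    intro hEq
    have hk0 : D c d g := htD hcd
    rw [hEq] at hk0
    have hd' : d = t b c := huq (Ne.symm hcb) hdb hdc (hrot _ _ _ hk0)
    rw [htbc] at hd'
    exact hda hd'
  have hge : g ≠ e := by
    intro hEq
    have hk0 : D c d g := htD hcd
    rw [hEq] at hk0
    have hc' : c = t d e := huq (Ne.symm hed) hcd (Ne.symm hec)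
      (hrot _ _ _ (hrot _ _ _ hk0))
    rw [htde] at hc'
    exact hca hc'
  have hgf : g ≠ f := by
    intro hEq
    have hk0 : D c d g := htD hcd
    rw [hEq] at hk0
    have hc' : c = t d f := huq (Ne.symm hfd) hcd (Ne.symm hfc)
      (hrot _ _ _ (hrot _ _ _ hk0))
    rw [htdf] at hc'
    exact hcb hc'
  -- the seven points exhaust Fin 7
  have hall : ∀ x : Fin 7, x = a ∨ x = b ∨ x = c ∨ x = d ∨ x = e ∨ x = f ∨ x = g := by
    intro x
    by_contra hx
    push_neg at hx
    obtain ⟨h1, h2, h3, h4, h5, h6, h7⟩ := hx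
    have hcard : ({x, a, b, c, d, e, f, g} : Finset (Fin 7)).card = 8 := by
      rw [Finset.card_insert_of_notMem, Finset.card_insert_of_notMem,
        Finset.card_insert_of_notMem, Finset.card_insert_of_notMem,
        Finset.card_insert_of_notMem, Finset.card_insert_of_notMem,
        Finset.card_insert_of_notMem, Finset.card_singleton]
      · simp only [Finset.mem_singleton]
        exact hgf.symm
      · simp only [Finset.mem_insert, Finset.mem_singleton, not_or]
        exact ⟨hfe.symm, hge.symm⟩
      · simp only [Finset.mem_insert, Finset.mem_singleton, not_or]
        exact ⟨hed.symm, hfd.symm, hgd.symm⟩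
      · simp only [Finset.mem_insert, Finset.mem_singleton, not_or]
        exact ⟨hcd, hec.symm, hfc.symm, hgc.symm⟩
      · simp only [Finset.mem_insert, Finset.mem_singleton, not_or]
        exact ⟨hcb.symm, hbd, heb.symm, hfb.symm, hgb.symm⟩
      · simp only [Finset.mem_insert, Finset.mem_singleton, not_or]
        exact ⟨hab, hca.symm, had, hea.symm, hfa.symm, hga.symm⟩
      · simp only [Finset.mem_insert, Finset.mem_singleton, not_or]
        exact ⟨h1, h2, h3, h4, h5, h6, h7⟩
    have := Finset.card_le_univ ({x, a, b, c, d, e, f, g} : Finset (Fin 7))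
    rw [hcard] at this
    simp at this
  -- the three remaining incidences
  have haf : a ≠ f := Ne.symm hfa
  have hafg : D a f g := by
    have hk := htD haf
    have hkb : t a f ≠ b := by
      intro hEq
      have hf' : f = t a b := huq hab hfa hfb (hs2 _ _ _ (hEq ▸ hk))
      exact hfc (hf'.trans hc.symm)
    have hkc : t a f ≠ c := by
      intro hEq
      have hf' : f = t a c := huq (Ne.symm hca) hfa hfc (hs2 _ _ _ (hEq ▸ hk))
      rw [htac] at hf'
      exact hfb hf'
    have hkd : t a f ≠ d := by
      intro hEq
      have ha' : a = t d f := huq (Ne.symm hfd) had haf (hs2 _ _ _ (hrot _ _ _ (hEq ▸ hk)))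
      rw [htdf] at ha'
      exact hab ha'
    have hke : t a f ≠ e := by
      intro hEq
      have htae : t a e = d := by
        have : D a e d := hs2 _ _ _ (htD had)
        exact (huq (Ne.symm hea) hda (Ne.symm hed) this).symm
      have hf' : f = t a e := huq (Ne.symm hea) hfa hfe (hs2 _ _ _ (hEq ▸ hk))
      rw [htae] at hf'
      exact hfd hf'
    rcases hall (t a f) with h | h | h | h | h | h | h
    · exact absurd h (ht1 haf)
    · exact absurd h hkb
    · exact absurd h hkc
    · exact absurd h hkd
    · exact absurd h hke
    · exact absurd h (ht2 haf)
    · exact h ▸ hk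
  have hbe : b ≠ e := Ne.symm heb
  have hbeg : D b e g := by
    have hk := htD hbe
    have hka : t b e ≠ a := by
      intro hEq
      have he' : e = t a b := huq hab hea heb (hrot _ _ _ (hEq ▸ hk))
      exact hec (he'.trans hc.symm)
    have hkc : t b e ≠ c := by
      intro hEq
      have he' : e = t b c := huq (Ne.symm hcb) heb hec (hs2 _ _ _ (hEq ▸ hk))
      rw [htbc] at he'
      exact hea he'
    have hkd : t b e ≠ d := by
      intro hEq
      have he' : e = t b d := huq hbd heb hed (hs2 _ _ _ (hEq ▸ hk))
      exact hfe (he'.trans hf.symm).symm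
    have hkf : t b e ≠ f := by
      intro hEq
      have htbf : t b f = d := by
        have : D b f d := hs2 _ _ _ (htD hbd)
        exact (huq (Ne.symm hfb) hdb (Ne.symm hfd) this).symm
      have he' : e = t b f := huq (Ne.symm hfb) heb (Ne.symm hfe) (hs2 _ _ _ (hEq ▸ hk))
      rw [htbf] at he'
      exact hed he'
    rcases hall (t b e) with h | h | h | h | h | h | h
    · exact absurd h hka
    · exact absurd h (ht1 hbe)
    · exact absurd h hkc
    · exact absurd h hkd
    · exact absurd h (ht2 hbe)
    · exact absurd h hkf
    · exact h ▸ hk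
  have hce : c ≠ e := Ne.symm hec
  have hcef : D c e f := by
    have hk := htD hce
    have hka : t c e ≠ a := by
      intro hEq
      have he' : e = t a c := huq (Ne.symm hca) hea hec (hrot _ _ _ (hEq ▸ hk))
      rw [htac] at he'
      exact heb he'
    have hkb : t c e ≠ b := by
      intro hEq
      have he' : e = t b c := huq (Ne.symm hcb) heb hec (hrot _ _ _ (hEq ▸ hk))
      rw [htbc] at he'
      exact hea he'
    have hkd : t c e ≠ d := by
      intro hEq
      have he' : e = t c d := huq hcd hec hed (hs2 _ _ _ (hEq ▸ hk))
      exact hge (he'.trans hg.symm).symm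
    have hkg : t c e ≠ g := by
      intro hEq
      have htcg : t c g = d := by
        have : D c g d := hs2 _ _ _ (htD hcd)
        exact (huq (Ne.symm hgc) hdc (Ne.symm hgd) this).symm
      have he' : e = t c g := huq (Ne.symm hgc) hec (Ne.symm hge) (hs2 _ _ _ (hEq ▸ hk))
      rw [htcg] at he'
      exact hed he'
    rcases hall (t c e) with h | h | h | h | h | h | h
    · exact absurd h hka
    · exact absurd h hkb
    · exact absurd h (ht1 hce)
    · exact absurd h hkd
    · exact absurd h (ht2 hce)
    · exact h ▸ hk
    · exact absurd h hkg
  exact ⟨a, b, c, d, e, f, g, hca, hcb, hea, hed, hfb, hfd, hga,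
    hnabd, htD hab, htD had, htD hbd, hafg, hbeg, htD hcd, hcef⟩

open Module Submodule in
/-- Any family of 7 pairwise distinct lines in the real projective plane in which no point
lies on more than three of the lines has at most 6 triple points. -/
theorem seven_lines_at_most_six_triple_points
    (L : Fin 7 → Submodule ℝ (Fin 3 → ℝ))
    (hinj : Function.Injective L)
    (hrank : ∀ i, Module.finrank ℝ (L i) = 2)
    (hmax : ∀ p : Submodule ℝ (Fin 3 → ℝ), Module.finrank ℝ p = 1 →
      Nat.card {i : Fin 7 // p ≤ L i} ≤ 3) :
    {p : Submodule ℝ (Fin 3 → ℝ) | Module.finrank ℝ p = 1 ∧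
      Nat.card {i : Fin 7 // p ≤ L i} = 3}.ncard ≤ 6 := by
  classical
  by_contra hcon
  push_neg at hcon
  set S := {p : Submodule ℝ (Fin 3 → ℝ) | Module.finrank ℝ p = 1 ∧
      Nat.card {i : Fin 7 // p ≤ L i} = 3} with hSdef
  have hSfin : S.Finite := by
    by_contra hinf
    rw [Set.Infinite.ncard hinf] at hcon
    omega
  obtain ⟨F, hFsub, hFcard⟩ := Finset.exists_subset_card_eq (s := hSfin.toFinset) (n := 7) (by
    rw [Set.ncard_eq_toFinset_card S hSfin] at hcon
    omega)
  have hFS : ∀ p ∈ F, p ∈ S := fun p hp => hSfin.mem_toFinset.mp (hFsub hp)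
  have hLne : ∀ {i j : Fin 7}, i ≠ j → L i ≠ L j := fun h hEq => h (hinj hEq)
  have hamb : finrank ℝ (Fin 3 → ℝ) = 3 := Module.finrank_fin_fun ℝ
  -- two distinct lines meet in a unique point
  have hpoint : ∀ (p q : Submodule ℝ (Fin 3 → ℝ)), finrank ℝ p = 1 → finrank ℝ q = 1 →
      ∀ {i j : Fin 7}, i ≠ j → p ≤ L i → p ≤ L j → q ≤ L i → q ≤ L j → p = q := by
    intro p q hp hq i j hij hpi hpj hqi hqj
    have hsup : finrank ℝ ↥(L i ⊔ L j) = 3 := by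
      have hle3 : finrank ℝ ↥(L i ⊔ L j) ≤ 3 := by
        have h := Submodule.finrank_le (L i ⊔ L j)
        rwa [hamb] at h
      have hlt : L i < L i ⊔ L j := by
        rcases (le_sup_left : L i ≤ L i ⊔ L j).lt_or_eq with h | h
        · exact h
        · exfalso
          have hji : L j ≤ L i := h ▸ le_sup_right
          exact hLne hij (Submodule.eq_of_le_of_finrank_eq hji
            (by rw [hrank i, hrank j])).symm
      have := Submodule.finrank_lt_finrank_of_lt hlt
      rw [hrank i] at this
      omega
    have hinf1 : finrank ℝ ↥(L i ⊓ L j) = 1 := by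
      have := Submodule.finrank_sup_add_finrank_inf_eq (L i) (L j)
      rw [hrank i, hrank j, hsup] at this
      omega
    have hp' : p = L i ⊓ L j :=
      Submodule.eq_of_le_of_finrank_eq (le_inf hpi hpj) (by rw [hp, hinf1])
    have hq' : q = L i ⊓ L j :=
      Submodule.eq_of_le_of_finrank_eq (le_inf hqi hqj) (by rw [hq, hinf1])
    rw [hp', hq']
  have hτ : ∀ p ∈ F, (Finset.univ.filter fun i => p ≤ L i).card = 3 := by
    intro p hp
    have h3 := (hFS p hp).2
    rwa [Nat.card_eq_fintype_card, Fintype.card_subtype] at h3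
  -- every pair of lines meets in a triple point of F
  have hcover : ∀ i j : Fin 7, i ≠ j → ∃ p ∈ F, p ≤ L i ∧ p ≤ L j := by
    intro i j hij
    set U := F.biUnion (fun p => (Finset.univ.filter fun m => p ≤ L m).powersetCard 2)
      with hUdef
    have hdisj : ∀ x ∈ F, ∀ y ∈ F, x ≠ y →
        Disjoint ((Finset.univ.filter fun m => x ≤ L m).powersetCard 2)
          ((Finset.univ.filter fun m => y ≤ L m).powersetCard 2) := by
      intro x hx y hy hxy
      rw [Finset.disjoint_left]
      intro s hsx hsy
      obtain ⟨hsub1, hc2⟩ := Finset.mem_powersetCard.mp hsx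
      obtain ⟨hsub2, _⟩ := Finset.mem_powersetCard.mp hsy
      obtain ⟨m1, m2, hm12, hseq⟩ := Finset.card_eq_two.mp hc2
      have h1x : x ≤ L m1 := (Finset.mem_filter.mp (hsub1 (hseq ▸ by simp))).2
      have h2x : x ≤ L m2 := (Finset.mem_filter.mp (hsub1 (hseq ▸ by simp))).2
      have h1y : y ≤ L m1 := (Finset.mem_filter.mp (hsub2 (hseq ▸ by simp))).2
      have h2y : y ≤ L m2 := (Finset.mem_filter.mp (hsub2 (hseq ▸ by simp))).2
      exact hxy (hpoint x y (hFS x hx).1 (hFS y hy).1 hm12 h1x h2x h1y h2y)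
    have hcardU : U.card = 21 := by
      rw [hUdef, Finset.card_biUnion hdisj]
      have : ∀ p ∈ F, ((Finset.univ.filter fun m => p ≤ L m).powersetCard 2).card = 3 := by
        intro p hp
        rw [Finset.card_powersetCard, hτ p hp]
        rfl
      rw [Finset.sum_congr rfl this, Finset.sum_const, hFcard]
      rfl
    have hUsub : U ⊆ Finset.univ.powersetCard 2 := by
      intro s hs
      obtain ⟨p, _, hps⟩ := Finset.mem_biUnion.mp hs
      obtain ⟨_, hc⟩ := Finset.mem_powersetCard.mp hps
      exact Finset.mem_powersetCard.mpr ⟨Finset.subset_univ s, hc⟩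
    have hcard2 : (Finset.univ.powersetCard 2 : Finset (Finset (Fin 7))).card = 21 := by
      rw [Finset.card_powersetCard, Finset.card_univ, Fintype.card_fin]
      rfl
    have hUeq : U = Finset.univ.powersetCard 2 :=
      Finset.eq_of_subset_of_card_le hUsub (by omega)
    have hmem : ({i, j} : Finset (Fin 7)) ∈ U := by
      rw [hUeq]
      exact Finset.mem_powersetCard.mpr ⟨Finset.subset_univ _, Finset.card_pair hij⟩
    obtain ⟨p, hpF, hps⟩ := Finset.mem_biUnion.mp hmem
    obtain ⟨hsub, _⟩ := Finset.mem_powersetCard.mp hps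
    refine ⟨p, hpF, ?_, ?_⟩
    · exact (Finset.mem_filter.mp (hsub (by simp))).2
    · exact (Finset.mem_filter.mp (hsub (by simp))).2
  -- normal covectors
  choose w hw0 hwmem using fun i => exists_normal (L i) (hrank i)
  have hwind : ∀ {i j : Fin 7}, i ≠ j → ∀ r : ℝ, w j ≠ r • w i := by
    intro i j hij r hEq
    have hr : r ≠ 0 := by
      intro h0
      rw [h0, zero_smul] at hEq
      exact hw0 j hEq
    apply hLne hij
    ext v
    rw [hwmem i v, hwmem j v, hEq, smul_dotProduct, smul_eq_mul, mul_eq_zero]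
    constructor
    · intro h; right; exact h
    · intro h; rcases h with h | h
      · exact absurd h hr
      · exact h
  set D : Fin 7 → Fin 7 → Fin 7 → Prop :=
    fun i j k => det3 (w i) (w j) (w k) = 0 with hDdef
  have hs1 : ∀ i j k, D i j k → D j i k := by
    intro i j k h
    show det3 (w j) (w i) (w k) = 0
    have : det3 (w j) (w i) (w k) = -det3 (w i) (w j) (w k) := by unfold det3; ring
    rw [this, h, neg_zero]
  have hs2 : ∀ i j k, D i j k → D i k j := by
    intro i j k h
    show det3 (w i) (w k) (w j) = 0
    have : det3 (w i) (w k) (w j) = -det3 (w i) (w j) (w k) := by unfold det3; ring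
    rw [this, h, neg_zero]
  -- Dep ↔ concurrency
  have hD_of : ∀ (i j k : Fin 7) (p : Submodule ℝ (Fin 3 → ℝ)), finrank ℝ p = 1 →
      p ≤ L i → p ≤ L j → p ≤ L k → D i j k := by
    intro i j k p hp hpi hpj hpk
    have hpbot : p ≠ ⊥ := by
      intro h
      rw [h, finrank_bot] at hp
      omega
    obtain ⟨v, hvp, hvne⟩ := Submodule.exists_mem_ne_zero_of_ne_bot hpbot
    have h1 : dotProduct (w i) v = 0 := (hwmem i v).mp (hpi hvp)
    have h2 : dotProduct (w j) v = 0 := (hwmem j v).mp (hpj hvp)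
    have h3 : dotProduct (w k) v = 0 := (hwmem k v).mp (hpk hvp)
    have hM : (Matrix.of ![w i, w j, w k]).mulVec v = 0 := by
      funext r
      fin_cases r
      · simpa [Matrix.mulVec, dotProduct] using h1
      · simpa [Matrix.mulVec, dotProduct] using h2
      · simpa [Matrix.mulVec, dotProduct] using h3
    show det3 (w i) (w j) (w k) = 0
    rw [det3_eq_det]
    exact (Matrix.exists_mulVec_eq_zero_iff).mp ⟨v, hvne, hM⟩
  have hof_D : ∀ i j k : Fin 7, D i j k →
      ∃ p : Submodule ℝ (Fin 3 → ℝ), finrank ℝ p = 1 ∧ p ≤ L i ∧ p ≤ L j ∧ p ≤ L k := by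
    intro i j k h
    have hdet : (Matrix.of ![w i, w j, w k]).det = 0 := by
      rw [← det3_eq_det]
      exact h
    obtain ⟨v, hvne, hMv⟩ := (Matrix.exists_mulVec_eq_zero_iff).mpr hdet
    have h1 : dotProduct (w i) v = 0 := by
      have := congrFun hMv 0
      simpa [Matrix.mulVec, dotProduct] using this
    have h2 : dotProduct (w j) v = 0 := by
      have := congrFun hMv 1
      simpa [Matrix.mulVec, dotProduct] using this
    have h3 : dotProduct (w k) v = 0 := by
      have := congrFun hMv 2
      simpa [Matrix.mulVec, dotProduct] using this
    refine ⟨Submodule.span ℝ {v}, finrank_span_singleton hvne, ?_, ?_, ?_⟩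
    · exact (Submodule.span_singleton_le_iff_mem v _).mpr ((hwmem i v).mpr h1)
    · exact (Submodule.span_singleton_le_iff_mem v _).mpr ((hwmem j v).mpr h2)
    · exact (Submodule.span_singleton_le_iff_mem v _).mpr ((hwmem k v).mpr h3)
  have hex : ∀ i j, i ≠ j → ∃ k, k ≠ i ∧ k ≠ j ∧ D i j k := by
    intro i j hij
    obtain ⟨p, hpF, hpi, hpj⟩ := hcover i j hij
    have hτp := hτ p hpF
    have hij_sub : ({i, j} : Finset (Fin 7)) ⊆ Finset.univ.filter fun m => p ≤ L m := by
      intro x hx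
      rcases Finset.mem_insert.mp hx with h | h
      · subst h; exact Finset.mem_filter.mpr ⟨Finset.mem_univ _, hpi⟩
      · rw [Finset.mem_singleton.mp h]
        exact Finset.mem_filter.mpr ⟨Finset.mem_univ _, hpj⟩
    have hne : ((Finset.univ.filter fun m => p ≤ L m) \ ({i, j} : Finset (Fin 7))).Nonempty := by
      rw [← Finset.card_pos, Finset.card_sdiff_of_subset hij_sub, hτp, Finset.card_pair hij]
      omega
    obtain ⟨k, hk⟩ := hne
    obtain ⟨hkf, hknot⟩ := Finset.mem_sdiff.mp hk
    simp only [Finset.mem_insert, Finset.mem_singleton, not_or] at hknot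
    exact ⟨k, hknot.1, hknot.2, hD_of i j k p (hFS p hpF).1 hpi hpj
      (Finset.mem_filter.mp hkf).2⟩
  have hun : ∀ i j k k', i ≠ j → k ≠ i → k ≠ j → k' ≠ i → k' ≠ j →
      D i j k → D i j k' → k = k' := by
    intro i j k k' hij hki hkj hk'i hk'j h1 h2
    by_contra hkk'
    obtain ⟨p, hp1, hpi, hpj, hpk⟩ := hof_D _ _ _ h1
    obtain ⟨q, hq1, hqi, hqj, hqk'⟩ := hof_D _ _ _ h2
    have hpq : p = q := hpoint p q hp1 hq1 hij hpi hpj hqi hqj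
    subst hpq
    have hsub : ({i, j, k, k'} : Finset (Fin 7)) ⊆ Finset.univ.filter fun m => p ≤ L m := by
      intro x hx
      simp only [Finset.mem_insert, Finset.mem_singleton] at hx
      rcases hx with h | h | h | h <;> subst h <;>
        exact Finset.mem_filter.mpr ⟨Finset.mem_univ _, by assumption⟩
    have hn1 : k ∉ ({k'} : Finset (Fin 7)) := by
      simp only [Finset.mem_singleton]
      exact hkk'
    have hn2 : j ∉ ({k, k'} : Finset (Fin 7)) := by
      simp only [Finset.mem_insert, Finset.mem_singleton, not_or]
      exact ⟨Ne.symm hkj, Ne.symm hk'j⟩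
    have hn3 : i ∉ ({j, k, k'} : Finset (Fin 7)) := by
      simp only [Finset.mem_insert, Finset.mem_singleton, not_or]
      exact ⟨hij, Ne.symm hki, Ne.symm hk'i⟩
    have hc4 : ({i, j, k, k'} : Finset (Fin 7)).card = 4 := by
      rw [Finset.card_insert_of_notMem hn3, Finset.card_insert_of_notMem hn2,
        Finset.card_insert_of_notMem hn1, Finset.card_singleton]
    have h4le : 4 ≤ Nat.card {m : Fin 7 // p ≤ L m} := by
      rw [Nat.card_eq_fintype_card, Fintype.card_subtype]
      calc 4 = ({i, j, k, k'} : Finset (Fin 7)).card := hc4.symm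
        _ ≤ _ := Finset.card_le_card hsub
    have := hmax p hp1
    omega
  obtain ⟨a, b, c, d, e, f, g, hca, hcb, hea, hed, hfb, hfd, hga,
    hnabd, h1, h2, h3, h4, h5, h6, h7⟩ := fano_structure D hs1 hs2 hex hun
  exact fano_vectors (w a) (w b) (w c) (w d) (w e) (w f) (w g)
    hnabd
    (hwind (Ne.symm hca)) (hwind (Ne.symm hcb))
    (hwind (Ne.symm hea)) (hwind (Ne.symm hed))
    (hwind (Ne.symm hfb)) (hwind (Ne.symm hfd))
    (hwind (Ne.symm hga))
    h1 h2 h3 h4 h5 h6 h7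
end

section
/- Let n ≥ 4, let α : Fin n → ℝ² have α_i, α_j linearly independent for all i ≠ j, and let K ⊆ Fin n with |K| = 4. Then the linear span in ℝⁿ of the four vectors α_L, where L ranges over the 3-element subsets of K, has dimension exactly 2; equivalently, the intersection D_K = ⋂_{L ⊆ K, |L| = 3} D_L of the four corresponding discriminantal hyperplanes has codimension 2 in ℝⁿ. (Hence the rank-2 combinatorics of B(n,2,α) contains a multiplicity-4 intersection for every 4-subset K, independently of α.) -/
/-- The discriminantal hyperplane `D_L = {b ∈ ℝⁿ : α_L · b = 0}`. -/
noncomputable def DL {n : ℕ} (α : Fin n → Fin 2 → ℝ) (L : Finset (Fin n)) :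
    Submodule ℝ (Fin n → ℝ) :=
  LinearMap.ker (∑ m, alphaL α L m • (LinearMap.proj m : (Fin n → ℝ) →ₗ[ℝ] ℝ))

/-- `D_K = ⋂_{L ⊆ K, |L| = 3} D_L`. -/
noncomputable def DK {n : ℕ} (α : Fin n → Fin 2 → ℝ) (K : Finset (Fin n)) :
    Submodule ℝ (Fin n → ℝ) :=
  ⨅ (L : Finset (Fin n)) (_ : L ⊆ K) (_ : L.card = 3), DL α L

lemma sort_triple {n : ℕ} {i j l : Fin n} (h1 : i < j) (h2 : j < l) :
    Finset.sort ({i, j, l} : Finset (Fin n)) (· ≤ ·) = [i, j, l] := by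
  rw [Finset.sort_insert, Finset.sort_insert, Finset.sort_singleton]
  · simp [le_of_lt h2]
  · simp [Fin.ne_of_lt h2]
  · intro b hb
    simp at hb
    rcases hb with rfl | rfl
    · exact le_of_lt h1
    · exact le_of_lt (h1.trans h2)
  · simp [Fin.ne_of_lt h1, Fin.ne_of_lt (h1.trans h2)]

lemma alphaL_triple {n : ℕ} (α : Fin n → Fin 2 → ℝ) {i j l : Fin n} (h1 : i < j) (h2 : j < l) :
    alphaL α ({i, j, l} : Finset (Fin n)) = alphaT α i j l := by
  unfold alphaL
  rw [sort_triple h1 h2]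

/-- Plücker-type relation. -/
lemma relAcd {n : ℕ} (α : Fin n → Fin 2 → ℝ) (a b c d : Fin n) :
    det2 (α a) (α b) • alphaT α a c d =
      det2 (α a) (α c) • alphaT α a b d - det2 (α a) (α d) • alphaT α a b c := by
  funext m
  simp only [alphaT, Pi.smul_apply, Pi.sub_apply, smul_eq_mul, det2]
  split_ifs <;> ring

/-- Plücker-type relation. -/
lemma relBcd {n : ℕ} (α : Fin n → Fin 2 → ℝ) (a b c d : Fin n) :
    det2 (α a) (α b) • alphaT α b c d =
      det2 (α b) (α c) • alphaT α a b d - det2 (α b) (α d) • alphaT α a b c := by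
  funext m
  simp only [alphaT, Pi.smul_apply, Pi.sub_apply, smul_eq_mul, det2]
  split_ifs <;> ring

/-- The linear map sending a vector to the corresponding dot-product functional. -/
noncomputable def toDualMap (n : ℕ) : (Fin n → ℝ) →ₗ[ℝ] Module.Dual ℝ (Fin n → ℝ) where
  toFun v := ∑ m, v m • (LinearMap.proj m : (Fin n → ℝ) →ₗ[ℝ] ℝ)
  map_add' u v := by simp [add_smul, Finset.sum_add_distrib]
  map_smul' r v := by simp [smul_smul, Finset.smul_sum]

lemma toDualMap_injective (n : ℕ) : Function.Injective (toDualMap n) := by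
  rw [injective_iff_map_eq_zero]
  intro v hv
  funext i
  have := congrFun (congrArg (fun f => f.toFun) hv) (Pi.single i 1)
  simp only [toDualMap, LinearMap.coe_mk, AddHom.coe_mk, LinearMap.coe_sum,
    Finset.sum_apply, LinearMap.smul_apply, LinearMap.proj_apply, smul_eq_mul] at this
  simpa [Pi.single_apply, mul_ite, Finset.sum_ite_eq] using this

/-- Enumeration of the 3-element subsets of a 4-element set. -/
lemma subsets_three {n : ℕ} {a b c d : Fin n} (hab : a ≠ b) (hac : a ≠ c) (had : a ≠ d)
    (hbc : b ≠ c) (hbd : b ≠ d) (hcd : c ≠ d) :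
    {L : Finset (Fin n) | L ⊆ ({a, b, c, d} : Finset (Fin n)) ∧ L.card = 3} =
      {({a, b, c} : Finset (Fin n)), {a, b, d}, {a, c, d}, {b, c, d}} := by
  have hKcard : ({a, b, c, d} : Finset (Fin n)).card = 4 := by
    rw [Finset.card_insert_of_notMem (by simp [hab, hac, had]),
      Finset.card_insert_of_notMem (by simp [hbc, hbd]),
      Finset.card_insert_of_notMem (by simp [hcd]), Finset.card_singleton]
  ext L
  simp only [Set.mem_setOf_eq, Set.mem_insert_iff, Set.mem_singleton_iff]
  constructor
  · rintro ⟨hsub, hcard⟩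
    have h1 : (({a, b, c, d} : Finset (Fin n)) \ L).card = 1 := by
      rw [Finset.card_sdiff_of_subset hsub, hKcard, hcard]
    obtain ⟨x, hx⟩ := Finset.card_eq_one.mp h1
    have hL : L = ({a, b, c, d} : Finset (Fin n)) \ {x} := by
      rw [← hx, Finset.sdiff_sdiff_eq_self hsub]
    have hxmem : x ∈ ({a, b, c, d} : Finset (Fin n)) := by
      have : x ∈ ({a, b, c, d} : Finset (Fin n)) \ L := by rw [hx]; simp
      exact (Finset.mem_sdiff.mp this).1
    simp only [Finset.mem_insert, Finset.mem_singleton] at hxmem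
    rcases hxmem with rfl | rfl | rfl | rfl
    · right; right; right
      rw [hL]; ext y
      simp only [Finset.mem_sdiff, Finset.mem_insert, Finset.mem_singleton]
      constructor
      · rintro ⟨h | h | h | h, hy⟩ <;> tauto
      · rintro (rfl | rfl | rfl) <;>
          exact ⟨by tauto, by first | exact Ne.symm hab | exact Ne.symm hac | exact Ne.symm had⟩
    · right; right; left
      rw [hL]; ext y
      simp only [Finset.mem_sdiff, Finset.mem_insert, Finset.mem_singleton]
      constructor
      · rintro ⟨h | h | h | h, hy⟩ <;> tauto
      · rintro (rfl | rfl | rfl) <;>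
          exact ⟨by tauto, by first | exact hab | exact Ne.symm hbc | exact Ne.symm hbd⟩
    · right; left
      rw [hL]; ext y
      simp only [Finset.mem_sdiff, Finset.mem_insert, Finset.mem_singleton]
      constructor
      · rintro ⟨h | h | h | h, hy⟩ <;> tauto
      · rintro (rfl | rfl | rfl) <;>
          exact ⟨by tauto, by first | exact hac | exact hbc | exact Ne.symm hcd⟩
    · left
      rw [hL]; ext y
      simp only [Finset.mem_sdiff, Finset.mem_insert, Finset.mem_singleton]
      constructor
      · rintro ⟨h | h | h | h, hy⟩ <;> tauto
      · rintro (rfl | rfl | rfl) <;>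
          exact ⟨by tauto, by first | exact had | exact hbd | exact hcd⟩
  · rintro (rfl | rfl | rfl | rfl) <;> constructor
    · intro y hy; simp at hy ⊢; tauto
    · rw [Finset.card_insert_of_notMem (by simp [hab, hac]),
        Finset.card_insert_of_notMem (by simp [hbc]), Finset.card_singleton]
    · intro y hy; simp at hy ⊢; tauto
    · rw [Finset.card_insert_of_notMem (by simp [hab, had]),
        Finset.card_insert_of_notMem (by simp [hbd]), Finset.card_singleton]
    · intro y hy; simp at hy ⊢; tauto
    · rw [Finset.card_insert_of_notMem (by simp [hac, had]),
        Finset.card_insert_of_notMem (by simp [hcd]), Finset.card_singleton]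
    · intro y hy; simp at hy ⊢; tauto
    · rw [Finset.card_insert_of_notMem (by simp [hbc, hbd]),
        Finset.card_insert_of_notMem (by simp [hcd]), Finset.card_singleton]

/-- For any generic arrangement of `n ≥ 4` lines in the plane and any 4-element subset `K` of
indices, the span of the four normal vectors `α_L`, `L ⊆ K`, `|L| = 3`, has dimension exactly
2; equivalently, `D_K` has codimension 2 in `ℝⁿ`. Hence the rank-2 combinatorics of
`B(n,2,α)` contains a multiplicity-4 intersection for every 4-subset `K`, independently of
`α`. -/
theorem DK_four_subset_codim_two {n : ℕ} (hn : 4 ≤ n) (α : Fin n → Fin 2 → ℝ)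
    (hα : ∀ i j : Fin n, i ≠ j → LinearIndependent ℝ ![α i, α j])
    (K : Finset (Fin n)) (hK : K.card = 4) :
    Module.finrank ℝ
        ↥(Submodule.span ℝ (alphaL α '' {L : Finset (Fin n) | L ⊆ K ∧ L.card = 3})) = 2 ∧
      Module.finrank ℝ ((Fin n → ℝ) ⧸ DK α K) = 2 := by
  classical
  -- extract the sorted elements of K
  have hlen : (Finset.sort K (· ≤ ·)).length = 4 := by rw [Finset.length_sort, hK]
  obtain ⟨a, b, c, d, hl⟩ : ∃ a b c d, Finset.sort K (· ≤ ·) = [a, b, c, d] := by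
    rcases h : Finset.sort K (· ≤ ·) with _ | ⟨a, _ | ⟨b, _ | ⟨c, _ | ⟨d, _ | e⟩⟩⟩⟩ <;>
      simp [h] at hlen ⊢
  have hsorted : List.Pairwise (· < ·) (Finset.sort K (· ≤ ·)) := (Finset.sortedLT_sort K).pairwise
  rw [hl] at hsorted
  simp only [List.pairwise_cons, List.mem_cons, List.mem_singleton, List.not_mem_nil] at hsorted
  obtain ⟨ha, hb, hc, -⟩ := hsorted
  have hab : a < b := ha b (by simp)
  have hac : a < c := ha c (by simp)
  have had : a < d := ha d (by simp)
  have hbc : b < c := hb c (by simp)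
  have hbd : b < d := hb d (by simp)
  have hcd : c < d := hc d (by simp)
  have hKe : K = ({a, b, c, d} : Finset (Fin n)) := by
    have := Finset.sort_toFinset (r := (· ≤ ·)) (s := K)
    rw [hl] at this
    simp only [List.toFinset_cons, List.toFinset_nil, insert_empty_eq] at this
    exact this.symm
  -- the four vectors
  set v1 := alphaT α a b c with hv1
  set v2 := alphaT α a b d with hv2
  set v3 := alphaT α a c d with hv3
  set v4 := alphaT α b c d with hv4
  have hdab : det2 (α a) (α b) ≠ 0 := det2_ne_zero (hα a b hab.ne)
  -- image of the set of 3-subsets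
  have himg : alphaL α '' {L : Finset (Fin n) | L ⊆ K ∧ L.card = 3} =
      ({v1, v2, v3, v4} : Set (Fin n → ℝ)) := by
    rw [hKe, subsets_three hab.ne hac.ne had.ne hbc.ne hbd.ne hcd.ne]
    simp only [Set.image_insert_eq, Set.image_singleton,
      alphaL_triple α hab hbc, alphaL_triple α hab hbd, alphaL_triple α hac hcd,
      alphaL_triple α hbc hcd]
    rfl
  -- the span equals the span of v1, v2
  have hmem3 : v3 ∈ Submodule.span ℝ ({v1, v2} : Set (Fin n → ℝ)) := by
    have h3 : v3 = (det2 (α a) (α b))⁻¹ •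
        (det2 (α a) (α c) • v2 - det2 (α a) (α d) • v1) := by
      rw [← relAcd α a b c d, inv_smul_smul₀ hdab]
    rw [h3]
    exact Submodule.smul_mem _ _ (Submodule.sub_mem _
      (Submodule.smul_mem _ _ (Submodule.subset_span (by simp)))
      (Submodule.smul_mem _ _ (Submodule.subset_span (by simp))))
  have hmem4 : v4 ∈ Submodule.span ℝ ({v1, v2} : Set (Fin n → ℝ)) := by
    have h4 : v4 = (det2 (α a) (α b))⁻¹ •
        (det2 (α b) (α c) • v2 - det2 (α b) (α d) • v1) := by
      rw [← relBcd α a b c d, inv_smul_smul₀ hdab]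
    rw [h4]
    exact Submodule.smul_mem _ _ (Submodule.sub_mem _
      (Submodule.smul_mem _ _ (Submodule.subset_span (by simp)))
      (Submodule.smul_mem _ _ (Submodule.subset_span (by simp))))
  have hspan : Submodule.span ℝ ({v1, v2, v3, v4} : Set (Fin n → ℝ)) =
      Submodule.span ℝ ({v1, v2} : Set (Fin n → ℝ)) := by
    apply le_antisymm
    · rw [Submodule.span_le]
      rintro x (rfl | rfl | rfl | rfl)
      · exact Submodule.subset_span (by simp)
      · exact Submodule.subset_span (by simp)
      · exact hmem3
      · exact hmem4
    · exact Submodule.span_mono (by intro x hx; rcases hx with rfl | rfl <;> simp)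
  -- v1, v2 are linearly independent
  have hli : LinearIndependent ℝ ![v1, v2] := by
    rw [LinearIndependent.pair_iff]
    intro s t hst
    have hcc := congrFun hst c
    have hdd := congrFun hst d
    simp only [hv1, hv2, alphaT, Pi.add_apply, Pi.smul_apply, smul_eq_mul, Pi.zero_apply,
      if_neg hac.ne', if_neg hbc.ne', if_pos rfl, if_neg (hcd.ne : c ≠ d),
      if_neg had.ne', if_neg hbd.ne', if_neg (hcd.ne' : d ≠ c), if_true,
      sub_zero, zero_sub, add_zero, zero_add, mul_zero, neg_zero] at hcc hdd
    constructor
    · have : s * det2 (α a) (α b) = 0 := by linarith [hcc]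
      exact (mul_eq_zero.mp this).resolve_right hdab
    · have : t * det2 (α a) (α b) = 0 := by linarith [hdd]
      exact (mul_eq_zero.mp this).resolve_right hdab
  have hrange : Set.range ![v1, v2] = ({v1, v2} : Set (Fin n → ℝ)) := by
    simp [Matrix.range_cons, Matrix.range_empty, Set.pair_comm]
  have hfr2 : Module.finrank ℝ
      ↥(Submodule.span ℝ ({v1, v2} : Set (Fin n → ℝ))) = 2 := by
    rw [← hrange, finrank_span_eq_card hli, Fintype.card_fin]
  have hfrspan : Module.finrank ℝ
      ↥(Submodule.span ℝ (alphaL α '' {L : Finset (Fin n) | L ⊆ K ∧ L.card = 3})) = 2 := by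
    rw [himg, hspan, hfr2]
  refine ⟨hfrspan, ?_⟩
  -- duality part
  set S : Set (Fin n → ℝ) := alphaL α '' {L : Finset (Fin n) | L ⊆ K ∧ L.card = 3} with hS
  have hDK : DK α K = (Submodule.span ℝ (⇑(toDualMap n) '' S)).dualCoannihilator := by
    ext x
    rw [← SetLike.mem_coe (p := (Submodule.span ℝ (⇑(toDualMap n) '' S)).dualCoannihilator),
      Submodule.coe_dualCoannihilator_span]
    simp only [DK, DL, Submodule.mem_iInf, LinearMap.mem_ker, Set.mem_setOf_eq, hS,
      Set.mem_image, forall_exists_index, and_imp]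
    constructor
    · rintro h f w L hL hLc rfl rfl
      have := h L hL hLc
      simpa [toDualMap] using this
    · intro h L hL hLc
      have := h (toDualMap n (alphaL α L)) (alphaL α L) L hL hLc rfl rfl
      simpa [toDualMap] using this
  have hmapfr : Module.finrank ℝ ↥(Submodule.span ℝ (⇑(toDualMap n) '' S)) = 2 := by
    rw [Submodule.span_image]
    rw [← LinearEquiv.finrank_eq
      (Submodule.equivMapOfInjective (toDualMap n) (toDualMap_injective n)
        (Submodule.span ℝ S))]
    exact hfrspan
  have e1 := Subspace.finrank_add_finrank_dualCoannihilator_eq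
    (Submodule.span ℝ (⇑(toDualMap n) '' S))
  rw [hDK]
  have e2 := Submodule.finrank_quotient_add_finrank
    ((Submodule.span ℝ (⇑(toDualMap n) '' S)).dualCoannihilator)
  rw [hmapfr] at e1
  omega
end
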